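/- arXiv:1810.05829 — 5 statements merged into one kernel-verified Lean document; each statement's English description precedes it below -/
import Mathlib

section
/- Let A be a commutative unital Banach algebra over ℂ and let X and Y be Banach A-modules. Let U be an open subset of X and let f : X → Y be A-differentiable on U. Then the map G : U → (X →L[ℂ] Y) defined by G(z) = fderiv ℂ f z is Fréchet differentiable (over ℂ) on U, and for every z₀ ∈ U its Fréchet derivative at z₀ is A-linear: for all a ∈ A and h ∈ X, (DG)_{z₀}(a • h) = a • (DG)_{z₀}(h), where A acts on continuous linear maps pointwise by (a • T)(v) = a • (T v). -/
open Metric Filter Complex Set Topology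

section auxiliary

lemma aux_tay {Y : Type*} [NormedAddCommGroup Y] [NormedSpace ℂ Y] [CompleteSpace Y]
    (g : ℂ → Y) (R K : ℝ) (hR : 0 < R)
    (hd : DifferentiableOn ℂ g (closedBall 0 R))
    (hK : ∀ w ∈ closedBall (0:ℂ) R, ‖g w‖ ≤ K) :
    ‖deriv g 0‖ ≤ K / R ∧
    ∀ s : ℂ, ‖s‖ ≤ R / 2 → ‖g s - g 0 - s • deriv g 0‖ ≤ 2 * K * ‖s‖^2 / R^2 := by
  have hK0 : 0 ≤ K := le_trans (norm_nonneg _) (hK 0 (mem_closedBall_self hR.le))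
  set R' : NNReal := ⟨R, hR.le⟩ with hR'
  have hcoe : (R' : ℝ) = R := rfl
  have hR'0 : 0 < R' := by exact_mod_cast hR
  have hp : HasFPowerSeriesOnBall g (cauchyPowerSeries g 0 R') 0 R' := by
    refine DifferentiableOn.hasFPowerSeriesOnBall ?_ hR'0
    rwa [hcoe]
  set p := cauchyPowerSeries g 0 R' with hpdef
  -- coefficient bounds
  have hcont : ContinuousOn (fun θ : ℝ => ‖g (circleMap 0 R θ)‖) (Set.uIcc 0 (2*Real.pi)) := by
    apply ContinuousOn.norm
    apply hd.continuousOn.comp (continuous_circleMap 0 R).continuousOn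
    intro θ _
    exact sphere_subset_closedBall (circleMap_mem_sphere 0 hR.le θ)
  have hint : ∫ θ : ℝ in (0)..2*Real.pi, ‖g (circleMap 0 R θ)‖ ≤ 2 * Real.pi * K := by
    have h2 : (2 * Real.pi * K) = ∫ θ : ℝ in (0)..2*Real.pi, K := by
      simp [mul_comm]
    rw [h2]
    apply intervalIntegral.integral_mono_on Real.two_pi_pos.le
      (hcont.intervalIntegrable) intervalIntegrable_const
    intro θ _
    exact hK _ (sphere_subset_closedBall (circleMap_mem_sphere 0 hR.le θ))
  have hcoeff : ∀ n, ‖p.coeff n‖ ≤ K / R ^ n := by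
    intro n
    rw [← FormalMultilinearSeries.norm_apply_eq_norm_coef]
    have := norm_cauchyPowerSeries_le g 0 (R' : ℝ) n
    rw [hcoe] at this
    refine this.trans ?_
    rw [abs_of_pos hR]
    have h1 : (2 * Real.pi)⁻¹ * ∫ θ : ℝ in (0)..2*Real.pi, ‖g (circleMap 0 R θ)‖ ≤ K := by
      rw [inv_mul_le_iff₀ Real.two_pi_pos]
      nlinarith [hint]
    calc _ ≤ K * R⁻¹ ^ n := by
          apply mul_le_mul_of_nonneg_right h1 (by positivity)
    _ = K / R ^ n := by rw [inv_pow]; ring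
  have hderiv : deriv g 0 = p.coeff 1 := hp.hasFPowerSeriesAt.deriv
  constructor
  · rw [hderiv]
    have := hcoeff 1
    simpa using this
  · intro s hs
    have hslt : ‖s‖ < (R' : ℝ) := by rw [hcoe]; linarith
    have hmem : s ∈ Metric.eball (0:ℂ) R' := by
      rw [mem_emetric_ball_zero_iff]
      exact_mod_cast hslt
    have hsum : HasSum (fun n : ℕ => p n fun _ => s) (g s) := by
      have := hp.hasSum hmem
      simpa using this
    have hsum' : HasSum (fun n : ℕ => s ^ n • p.coeff n) (g s) := by
      refine hsum.congr_fun ?_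
      intro n
      exact FormalMultilinearSeries.apply_eq_pow_smul_coeff.symm
    have htail : HasSum (fun n : ℕ => s ^ (n+2) • p.coeff (n+2))
        (g s - ∑ i ∈ Finset.range 2, s ^ i • p.coeff i) :=
      (hasSum_nat_add_iff' 2).2 hsum'
    have hrange : ∑ i ∈ Finset.range 2, s ^ i • p.coeff i = g 0 + s • deriv g 0 := by
      rw [Finset.sum_range_succ, Finset.sum_range_one]
      have h0 : p.coeff 0 = g 0 := hp.coeff_zero fun _ => 1
      rw [h0, hderiv]
      simp
    -- geometric bound
    set q : ℝ := ‖s‖ / R with hq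
    have hq0 : 0 ≤ q := by positivity
    have hq1 : q ≤ 1/2 := by
      rw [hq, div_le_div_iff₀ hR (by norm_num)]
      linarith
    have hgeo : HasSum (fun n : ℕ => (K * q ^ 2) * q ^ n) ((K * q^2) * (1 - q)⁻¹) :=
      (hasSum_geometric_of_lt_one hq0 (by linarith)).mul_left _
    have hbound : ∀ n : ℕ, ‖s ^ (n+2) • p.coeff (n+2)‖ ≤ (K * q ^ 2) * q ^ n := by
      intro n
      rw [norm_smul, norm_pow]
      calc ‖s‖ ^ (n+2) * ‖p.coeff (n+2)‖ ≤ ‖s‖ ^ (n+2) * (K / R ^ (n+2)) := by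
            apply mul_le_mul_of_nonneg_left (hcoeff (n+2)) (by positivity)
      _ = (K * q ^ 2) * q ^ n := by
            rw [hq, div_pow, div_pow, pow_add]; field_simp; ring
    have hnorm : ‖g s - (g 0 + s • deriv g 0)‖ ≤ (K * q^2) * (1 - q)⁻¹ := by
      rw [← hrange]
      exact htail.norm_le_of_bounded hgeo hbound
    have hfinal : (K * q^2) * (1 - q)⁻¹ ≤ 2 * K * ‖s‖^2 / R^2 := by
      have h2 : (1 - q)⁻¹ ≤ 2 := by
        rw [inv_le_comm₀ (by linarith) (by norm_num)]
        linarith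
      calc (K * q^2) * (1 - q)⁻¹ ≤ (K * q^2) * 2 := by
            apply mul_le_mul_of_nonneg_left h2 (by positivity)
      _ = 2 * K * ‖s‖^2 / R^2 := by rw [hq]; field_simp
    calc ‖g s - g 0 - s • deriv g 0‖ = ‖g s - (g 0 + s • deriv g 0)‖ := by
          rw [sub_sub]
    _ ≤ _ := hnorm
    _ ≤ _ := hfinal

variable {X : Type*} [NormedAddCommGroup X] [NormedSpace ℂ X]
    {Y : Type*} [NormedAddCommGroup Y] [NormedSpace ℂ Y] [CompleteSpace Y]

set_option linter.unusedSectionVars false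

lemma aux_slice {U : Set X} {f : X → Y} (hdiff : ∀ z ∈ U, DifferentiableAt ℂ f z)
    (x w : X) (s : ℂ) (hmem : x + s • w ∈ U) :
    HasDerivAt (fun s' : ℂ => f (x + s' • w)) (fderiv ℂ f (x + s • w) w) s := by
  have h1 : HasDerivAt (fun s' : ℂ => x + s' • w) w s := by
    simpa using ((hasDerivAt_id s).smul_const w).const_add x
  have h2 := (hdiff _ hmem).hasFDerivAt
  exact h2.comp_hasDerivAt s h1

lemma aux_L1 {U : Set X} (f : X → Y) (hdiff : ∀ z ∈ U, DifferentiableAt ℂ f z)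
    (z₀ : X) (δ M : ℝ) (hδ : 0 < δ)
    (hδU : closedBall z₀ δ ⊆ U) (hM : ∀ x ∈ closedBall z₀ δ, ‖f x‖ ≤ M)
    (x : X) (hx : x ∈ closedBall z₀ (δ/2)) (w : X) :
    ‖fderiv ℂ f x w‖ ≤ 2 * M / δ * ‖w‖ := by
  have hM0 : 0 ≤ M := le_trans (norm_nonneg _)
    (hM z₀ (mem_closedBall_self hδ.le))
  rcases eq_or_ne w 0 with rfl | hw
  · simp
  have hw0 : 0 < ‖w‖ := norm_pos_iff.2 hw
  set Rw : ℝ := δ/2/‖w‖ with hRw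
  have hRwpos : 0 < Rw := by positivity
  have hmem : ∀ s : ℂ, s ∈ closedBall (0:ℂ) Rw → x + s • w ∈ closedBall z₀ δ := by
    intro s hs
    rw [mem_closedBall, dist_zero_right] at hs
    rw [mem_closedBall, dist_eq_norm]
    have hx' : ‖x - z₀‖ ≤ δ/2 := by rwa [mem_closedBall, dist_eq_norm] at hx
    have h2 : ‖s • w‖ ≤ δ/2 := by
      rw [norm_smul]
      calc ‖s‖ * ‖w‖ ≤ Rw * ‖w‖ := mul_le_mul_of_nonneg_right hs hw0.le
      _ = δ/2 := by rw [hRw]; field_simp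
    have he : x + s • w - z₀ = (x - z₀) + s • w := by abel
    rw [he]
    calc ‖(x - z₀) + s • w‖ ≤ ‖x - z₀‖ + ‖s • w‖ := norm_add_le _ _
    _ ≤ δ := by linarith
  have hd : DifferentiableOn ℂ (fun s : ℂ => f (x + s • w)) (closedBall 0 Rw) :=
    fun s hs => ((aux_slice hdiff x w s (hδU (hmem s hs))).differentiableAt).differentiableWithinAt
  have hK : ∀ s ∈ closedBall (0:ℂ) Rw, ‖f (x + s • w)‖ ≤ M :=
    fun s hs => hM _ (hmem s hs)
  have h1 := (aux_tay _ Rw M hRwpos hd hK).1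
  have h2 : deriv (fun s : ℂ => f (x + s • w)) 0 = fderiv ℂ f x w := by
    have := (aux_slice hdiff x w 0 (by simpa using hδU (hmem 0 (mem_closedBall_self hRwpos.le)))).deriv
    simpa using this
  rw [h2] at h1
  refine h1.trans ?_
  rw [hRw]
  have : M / (δ / 2 / ‖w‖) = 2 * M / δ * ‖w‖ := by field_simp
  rw [this]

lemma aux_main {U : Set X} (hU : IsOpen U) (f : X → Y)
    (hdiff : ∀ z ∈ U, DifferentiableAt ℂ f z)
    (z₀ : X) (δ M : ℝ) (hδ : 0 < δ)
    (hδU : closedBall z₀ δ ⊆ U) (hM : ∀ x ∈ closedBall z₀ δ, ‖f x‖ ≤ M)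
    (h k : X) (hk0 : k ≠ 0) (hk : ‖k‖ ≤ δ/8) :
    Tendsto (fun t : ℂ => t⁻¹ • (fderiv ℂ f (z₀ + t • h) k - fderiv ℂ f z₀ k)) (𝓝[≠] (0:ℂ))
      (𝓝 (deriv (fun s : ℂ => fderiv ℂ f (z₀ + s • k) h) 0)) ∧
    DifferentiableOn ℂ (fun s : ℂ => fderiv ℂ f (z₀ + s • k) h) (ball 0 (3*δ/8/‖k‖)) ∧
    ‖deriv (fun s : ℂ => fderiv ℂ f (z₀ + s • k) h) 0‖ ≤ 8*M/δ^2 * ‖h‖ * ‖k‖ ∧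
    ‖fderiv ℂ f (z₀ + k) h - fderiv ℂ f z₀ h
        - deriv (fun s : ℂ => fderiv ℂ f (z₀ + s • k) h) 0‖ ≤ 64*M/δ^3 * ‖h‖ * ‖k‖^2 := by
  have hM0 : 0 ≤ M := le_trans (norm_nonneg _) (hM z₀ (mem_closedBall_self hδ.le))
  have hknorm : 0 < ‖k‖ := norm_pos_iff.2 hk0
  set ψ : ℂ → Y := fun s : ℂ => fderiv ℂ f (z₀ + s • k) h with hψdef
  set ρ : ℝ := δ/2/(‖h‖+1) with hρdef
  have hρ : 0 < ρ := by positivity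
  have hρh : ρ * ‖h‖ ≤ δ/2 := by
    rw [hρdef]
    rw [div_mul_eq_mul_div, div_le_iff₀ (by positivity)]
    have : ‖h‖ ≤ ‖h‖ + 1 := by linarith
    nlinarith [norm_nonneg h]
  set R₂ : ℝ := 3*δ/8/‖k‖ with hR₂def
  have hR₂ : 0 < R₂ := by positivity
  set gfam : ℂ → ℂ → Y := fun t s => t⁻¹ • (f (z₀ + t • h + s • k) - f (z₀ + s • k)) with hgfam
  -- membership
  have hmem : ∀ s : ℂ, ‖s‖ ≤ R₂ → ∀ t : ℂ, ‖t‖ ≤ ρ → z₀ + t • h + s • k ∈ closedBall z₀ δ := by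
    intro s hs t ht
    rw [mem_closedBall, dist_eq_norm]
    have he : z₀ + t • h + s • k - z₀ = t • h + s • k := by abel
    rw [he]
    have h1 : ‖t • h‖ ≤ δ/2 := by
      rw [norm_smul]
      calc ‖t‖ * ‖h‖ ≤ ρ * ‖h‖ := mul_le_mul_of_nonneg_right ht (norm_nonneg h)
      _ ≤ δ/2 := hρh
    have h2 : ‖s • k‖ ≤ 3*δ/8 := by
      rw [norm_smul]
      calc ‖s‖ * ‖k‖ ≤ R₂ * ‖k‖ := mul_le_mul_of_nonneg_right hs hknorm.le
      _ = 3*δ/8 := by rw [hR₂def]; field_simp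
    calc ‖t • h + s • k‖ ≤ ‖t • h‖ + ‖s • k‖ := norm_add_le _ _
    _ ≤ δ := by linarith
  have hmem0 : ∀ s : ℂ, ‖s‖ ≤ R₂ → z₀ + s • k ∈ closedBall z₀ δ := by
    intro s hs
    have := hmem s hs 0 (by simpa using hρ.le)
    simpa using this
  -- differentiability of the family
  have hdiffg : ∀ t : ℂ, ‖t‖ ≤ ρ → DifferentiableOn ℂ (gfam t) (ball 0 R₂) := by
    intro t ht
    intro s hs
    rw [mem_ball, dist_zero_right] at hs
    have e1 : HasDerivAt (fun s' : ℂ => f (z₀ + t • h + s' • k))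
        (fderiv ℂ f (z₀ + t • h + s • k) k) s :=
      aux_slice hdiff (z₀ + t • h) k s (hδU (hmem s hs.le t ht))
    have e2 : HasDerivAt (fun s' : ℂ => f (z₀ + s' • k))
        (fderiv ℂ f (z₀ + s • k) k) s :=
      aux_slice hdiff z₀ k s (hδU (hmem0 s hs.le))
    exact (((e1.sub e2).const_smul t⁻¹).differentiableAt).differentiableWithinAt
  -- deriv of ψ slices
  have hψval : ∀ s : ℂ, ‖s‖ ≤ R₂ →
      deriv (fun τ : ℂ => f (z₀ + s • k + τ • h)) 0 = ψ s := by
    intro s hs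
    have := (aux_slice hdiff (z₀ + s • k) h 0
      (by simpa using hδU (hmem0 s hs))).deriv
    simpa [hψdef] using this
  -- uniform convergence
  have huc : TendstoUniformlyOn gfam ψ (𝓝[≠] (0:ℂ)) (ball 0 R₂) := by
    rw [Metric.tendstoUniformlyOn_iff]
    intro ε hε
    have hev : ∀ᶠ t : ℂ in 𝓝[≠] (0:ℂ),
        0 < ‖t‖ ∧ ‖t‖ ≤ ρ/2 ∧ 2*M*‖t‖/ρ^2 < ε := by
      have h1 : ∀ᶠ t : ℂ in 𝓝 (0:ℂ), ‖t‖ ≤ ρ/2 ∧ 2*M*‖t‖/ρ^2 < ε := by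
        have hb : 0 < min (ρ/2) (ε * ρ^2 / (2*M+1)) := by positivity
        filter_upwards [Metric.ball_mem_nhds (0:ℂ) hb] with t ht
        rw [mem_ball, dist_zero_right, lt_min_iff] at ht
        refine ⟨ht.1.le, ?_⟩
        have h3 : ‖t‖ < ε * ρ^2 / (2*M+1) := ht.2
        rw [div_lt_iff₀ (by positivity)]
        rw [lt_div_iff₀ (by positivity)] at h3
        nlinarith [norm_nonneg t, sq_nonneg ρ]
      filter_upwards [eventually_nhdsWithin_of_eventually_nhds h1,
        self_mem_nhdsWithin] with t h1 h2
      exact ⟨norm_pos_iff.2 h2, h1.1, h1.2⟩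
    filter_upwards [hev] with t ⟨ht0, htρ, htε⟩
    intro s hs
    rw [mem_ball, dist_zero_right] at hs
    -- Taylor estimate for θ τ = f (z₀ + s•k + τ•h)
    set θ : ℂ → Y := fun τ => f (z₀ + s • k + τ • h) with hθ
    have hdθ : DifferentiableOn ℂ θ (closedBall 0 ρ) := by
      intro τ hτ
      rw [mem_closedBall, dist_zero_right] at hτ
      have : z₀ + s • k + τ • h ∈ closedBall z₀ δ := by
        have := hmem s hs.le τ hτ
        have he : z₀ + τ • h + s • k = z₀ + s • k + τ • h := by abel
        rwa [he] at this
      exact ((aux_slice hdiff (z₀ + s • k) h τ (hδU this)).differentiableAt).differentiableWithinAt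
    have hKθ : ∀ τ ∈ closedBall (0:ℂ) ρ, ‖θ τ‖ ≤ M := by
      intro τ hτ
      rw [mem_closedBall, dist_zero_right] at hτ
      apply hM
      have := hmem s hs.le τ hτ
      have he : z₀ + τ • h + s • k = z₀ + s • k + τ • h := by abel
      rwa [he] at this
    have htay := (aux_tay θ ρ M hρ hdθ hKθ).2 t htρ
    have hθd : deriv θ 0 = ψ s := hψval s hs.le
    rw [hθd] at htay
    rw [dist_eq_norm]
    have htne : t ≠ 0 := norm_pos_iff.1 ht0
    have hgf : ψ s - gfam t s = (-t⁻¹) • (θ t - θ 0 - t • ψ s) := by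
      have e0 : θ 0 = f (z₀ + s • k) := by rw [hθ]; simp
      have e1 : θ t = f (z₀ + t • h + s • k) := by
        have he : z₀ + s • k + t • h = z₀ + t • h + s • k := by abel
        show f (z₀ + s • k + t • h) = f (z₀ + t • h + s • k)
        rw [he]
      show ψ s - t⁻¹ • (f (z₀ + t • h + s • k) - f (z₀ + s • k)) = _
      rw [← e0, ← e1]
      match_scalars <;> field_simp
    rw [hgf, norm_smul, norm_neg, norm_inv]
    calc ‖t‖⁻¹ * ‖θ t - θ 0 - t • ψ s‖ ≤ ‖t‖⁻¹ * (2 * M * ‖t‖^2 / ρ^2) := by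
          apply mul_le_mul_of_nonneg_left htay (by positivity)
    _ = 2*M*‖t‖/ρ^2 := by field_simp [norm_pos_iff.1 ht0]
    _ < ε := htε
  -- locally uniform limit machinery
  have hF : ∀ᶠ t : ℂ in 𝓝[≠] (0:ℂ), DifferentiableOn ℂ (gfam t) (ball 0 R₂) := by
    have h1 : ∀ᶠ t : ℂ in 𝓝 (0:ℂ), ‖t‖ ≤ ρ := by
      filter_upwards [Metric.ball_mem_nhds (0:ℂ) hρ] with t ht
      rw [mem_ball, dist_zero_right] at ht; exact ht.le
    filter_upwards [eventually_nhdsWithin_of_eventually_nhds h1] with t ht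
    exact hdiffg t ht
  have hltu := huc.tendstoLocallyUniformlyOn
  have hψd : DifferentiableOn ℂ ψ (ball 0 R₂) :=
    hltu.differentiableOn hF isOpen_ball
  have hdconv := hltu.deriv hF isOpen_ball
  have h0mem : (0:ℂ) ∈ ball (0:ℂ) R₂ := mem_ball_self hR₂
  have htend0 : Tendsto (fun t : ℂ => deriv (gfam t) 0) (𝓝[≠] (0:ℂ)) (𝓝 (deriv ψ 0)) :=
    hdconv.tendsto_at h0mem
  -- identify deriv (gfam t) 0
  have hgd : ∀ t : ℂ, t ≠ 0 → ‖t‖ ≤ ρ →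
      deriv (gfam t) 0 = t⁻¹ • (fderiv ℂ f (z₀ + t • h) k - fderiv ℂ f z₀ k) := by
    intro t ht0 htρ
    have e1 : HasDerivAt (fun s' : ℂ => f (z₀ + t • h + s' • k))
        (fderiv ℂ f (z₀ + t • h + (0:ℂ) • k) k) 0 :=
      aux_slice hdiff (z₀ + t • h) k 0 (hδU (hmem 0 (by simp [hR₂.le]) t htρ))
    have e2 : HasDerivAt (fun s' : ℂ => f (z₀ + s' • k))
        (fderiv ℂ f (z₀ + (0:ℂ) • k) k) 0 :=
      aux_slice hdiff z₀ k 0 (hδU (hmem0 0 (by simp [hR₂.le])))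
    have := ((e1.sub e2).const_smul t⁻¹).deriv
    simp at this; exact this
  constructor
  · refine htend0.congr' ?_
    have h1 : ∀ᶠ t : ℂ in 𝓝 (0:ℂ), ‖t‖ ≤ ρ := by
      filter_upwards [Metric.ball_mem_nhds (0:ℂ) hρ] with t ht
      rw [mem_ball, dist_zero_right] at ht; exact ht.le
    filter_upwards [eventually_nhdsWithin_of_eventually_nhds h1,
      self_mem_nhdsWithin] with t h1 h2
    exact hgd t h2 h1
  refine ⟨hψd, ?_⟩
  -- bounds via aux_tay on ψ
  set R : ℝ := δ/4/‖k‖ with hRdef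
  have hRpos : 0 < R := by positivity
  have hRR₂ : R < R₂ := by
    rw [hRdef, hR₂def]
    have h1 : δ/4 < 3*δ/8 := by linarith
    exact (div_lt_div_iff_of_pos_right hknorm).mpr h1
  have hsub : closedBall (0:ℂ) R ⊆ ball (0:ℂ) R₂ := closedBall_subset_ball hRR₂
  have hψdR : DifferentiableOn ℂ ψ (closedBall 0 R) := hψd.mono hsub
  set Kb : ℝ := 2*M/δ*‖h‖ with hKbdef
  have hKb : ∀ s ∈ closedBall (0:ℂ) R, ‖ψ s‖ ≤ Kb := by
    intro s hs
    rw [mem_closedBall, dist_zero_right] at hs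
    apply aux_L1 f hdiff z₀ δ M hδ hδU hM
    rw [mem_closedBall, dist_eq_norm]
    have he : z₀ + s • k - z₀ = s • k := by abel
    rw [he, norm_smul]
    calc ‖s‖*‖k‖ ≤ R*‖k‖ := mul_le_mul_of_nonneg_right hs hknorm.le
    _ = δ/4 := by rw [hRdef]; field_simp
    _ ≤ δ/2 := by linarith
  obtain ⟨ha, hb⟩ := aux_tay ψ R Kb hRpos hψdR hKb
  constructor
  · refine ha.trans ?_
    have heq : Kb / R = 8*M/δ^2*‖h‖*‖k‖ := by
      rw [hKbdef, hRdef]; field_simp; ring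
    rw [heq]
  · have hR2 : 2 ≤ R := by
      rw [hRdef, le_div_iff₀ hknorm]; linarith
    have h1 : ‖(1:ℂ)‖ ≤ R/2 := by rw [norm_one]; linarith
    have hb1 := hb 1 h1
    have e1 : ψ 1 = fderiv ℂ f (z₀ + k) h := by rw [hψdef]; simp
    have e0 : ψ 0 = fderiv ℂ f z₀ h := by rw [hψdef]; simp
    rw [e1, e0, one_smul] at hb1
    refine hb1.trans ?_
    have heq : 2*Kb*‖(1:ℂ)‖^2/R^2 = 64*M/δ^3*‖h‖*‖k‖^2 := by
      rw [hKbdef, hRdef, norm_one]; field_simp; ring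
    rw [heq]

end auxiliary

/-- Let `A` be a commutative unital Banach algebra over `ℂ` and let
`X`, `Y` be Banach `A`-modules. Let `U ⊆ X` be open and let `f : X → Y` be
`A`-differentiable on `U`. Then `G : U → (X →L[ℂ] Y)`, `G z = fderiv ℂ f z`, is
Fréchet differentiable over `ℂ` on `U`, and its Fréchet derivative at every
`z₀ ∈ U` is `A`-linear, where `A` acts on continuous linear maps pointwise:
`(a • T) v = a • (T v)`. (The `A`-linearity is stated by evaluating at an
arbitrary vector `v`, which is exactly the pointwise action.) -/
theorem stmt_1
    {A : Type*} [NormedCommRing A] [NormedAlgebra ℂ A] [CompleteSpace A]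
    {X : Type*} [NormedAddCommGroup X] [NormedSpace ℂ X] [CompleteSpace X]
    [Module A X] [IsBoundedSMul A X] [IsScalarTower ℂ A X]
    {Y : Type*} [NormedAddCommGroup Y] [NormedSpace ℂ Y] [CompleteSpace Y]
    [Module A Y] [IsBoundedSMul A Y] [IsScalarTower ℂ A Y]
    (U : Set X) (hU : IsOpen U) (f : X → Y)
    (hdiff : ∀ z ∈ U, DifferentiableAt ℂ f z)
    (hlin : ∀ z ∈ U, ∀ (a : A) (x : X), fderiv ℂ f z (a • x) = a • fderiv ℂ f z x) :
    ∀ z₀ ∈ U,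
      DifferentiableAt ℂ (fun z : X => fderiv ℂ f z) z₀ ∧
      ∀ (a : A) (h v : X),
        (fderiv ℂ (fun z : X => fderiv ℂ f z) z₀ (a • h)) v
          = a • ((fderiv ℂ (fun z : X => fderiv ℂ f z) z₀ h) v) := by
  haveI : SMulCommClass ℂ A Y :=
    ⟨fun c a y => by
      rw [← smul_assoc, Algebra.smul_def, mul_comm (algebraMap ℂ A c) a, mul_smul,
        algebraMap_smul]⟩
  intro z₀ hz₀
  -- Step 0 : local bound for f
  obtain ⟨ε, hε, hεU⟩ := Metric.isOpen_iff.1 hU z₀ hz₀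
  obtain ⟨δ₁, hδ₁, hcont⟩ :=
    Metric.continuousAt_iff.1 (hdiff z₀ hz₀).continuousAt 1 one_pos
  set δ : ℝ := min ε δ₁ / 2 with hδdef
  have hδ : 0 < δ := by positivity
  have hδε : δ < ε := by
    have : min ε δ₁ ≤ ε := min_le_left _ _
    rw [hδdef]; linarith
  have hδδ₁ : δ < δ₁ := by
    have : min ε δ₁ ≤ δ₁ := min_le_right _ _
    rw [hδdef]; linarith
  have hδU : closedBall z₀ δ ⊆ U := fun x hx => hεU (by
    rw [mem_closedBall] at hx
    rw [mem_ball]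
    linarith)
  set M : ℝ := ‖f z₀‖ + 1 with hMdef
  have hM1 : 1 ≤ M := by rw [hMdef]; linarith [norm_nonneg (f z₀)]
  have hM0 : 0 < M := by linarith
  have hM : ∀ x ∈ closedBall z₀ δ, ‖f x‖ ≤ M := by
    intro x hx
    rw [mem_closedBall] at hx
    have h2 : dist (f x) (f z₀) < 1 := hcont (by linarith)
    rw [dist_eq_norm] at h2
    have := norm_sub_norm_le (f x) (f z₀)
    rw [hMdef]; linarith
  have hmain := fun (h k : X) (hk0 : k ≠ 0) (hk : ‖k‖ ≤ δ/8) =>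
    aux_main hU f hdiff z₀ δ M hδ hδU hM h k hk0 hk
  -- the difference-quotient family
  set expr : X → X → ℂ → Y :=
    fun h k t => t⁻¹ • (fderiv ℂ f (z₀ + t • h) k - fderiv ℂ f z₀ k) with hexprdef
  have hexprsmul : ∀ (h : X) (c : ℂ) (k : X) (t : ℂ),
      expr h (c • k) t = c • expr h k t := by
    intro h c k t
    rw [hexprdef]
    simp only [map_smul, ← smul_sub]
    rw [smul_comm]
  have hexpradd : ∀ (h k₁ k₂ : X) (t : ℂ),
      expr h (k₁ + k₂) t = expr h k₁ t + expr h k₂ t := by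
    intro h k₁ k₂ t
    rw [hexprdef]
    simp only [map_add, ← smul_add]
    congr 1
    abel
  have hscale : ∀ k : X, k ≠ 0 → ∃ c : ℂ, c ≠ 0 ∧ ‖c • k‖ = δ/8 ∧ c • k ≠ 0 := by
    intro k hk0
    have hknorm : 0 < ‖k‖ := norm_pos_iff.2 hk0
    refine ⟨((δ/8/‖k‖ : ℝ) : ℂ), ?_, ?_, ?_⟩
    · simp only [ne_eq, Complex.ofReal_eq_zero]
      positivity
    · rw [norm_smul, Complex.norm_real, Real.norm_eq_abs, abs_of_pos (by positivity)]
      field_simp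
    · apply smul_ne_zero _ hk0
      simp only [ne_eq, Complex.ofReal_eq_zero]
      positivity
  have hconv : ∀ h k : X, ∃ L : Y, Tendsto (expr h k) (𝓝[≠] (0:ℂ)) (𝓝 L) := by
    intro h k
    rcases eq_or_ne k 0 with rfl | hk0
    · refine ⟨0, ?_⟩
      have : expr h 0 = fun _ => (0:Y) := by
        funext t; rw [hexprdef]; simp
      rw [this]
      exact tendsto_const_nhds
    · obtain ⟨c, hc0, hck, hck0⟩ := hscale k hk0
      obtain htd := (hmain h (c • k) hck0 (le_of_eq hck)).1
      have h2 := htd.const_smul c⁻¹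
      refine ⟨_, h2.congr ?_⟩
      intro t
      show c⁻¹ • expr h (c • k) t = expr h k t
      rw [hexprsmul, smul_smul, inv_mul_cancel₀ hc0, one_smul]
  choose T hT using hconv
  have huniq : ∀ (h k : X) (L : Y),
      Tendsto (expr h k) (𝓝[≠] (0:ℂ)) (𝓝 L) → T h k = L := by
    intro h k L hL
    exact tendsto_nhds_unique (hT h k) hL
  have hTderiv : ∀ (h k : X), k ≠ 0 → ‖k‖ ≤ δ/8 →
      T h k = deriv (fun s : ℂ => fderiv ℂ f (z₀ + s • k) h) 0 :=
    fun h k hk0 hk => huniq h k _ (hmain h k hk0 hk).1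
  have hTzero : ∀ h, T h 0 = 0 := by
    intro h
    apply huniq
    have : expr h 0 = fun _ => (0:Y) := by funext t; rw [hexprdef]; simp
    rw [this]; exact tendsto_const_nhds
  have hTsmul2 : ∀ (h : X) (c : ℂ) (k : X), T h (c • k) = c • T h k := by
    intro h c k
    apply huniq
    have h2 := (hT h k).const_smul c
    refine h2.congr ?_
    intro t
    rw [hexprsmul]
  have hTadd2 : ∀ (h k₁ k₂ : X), T h (k₁ + k₂) = T h k₁ + T h k₂ := by
    intro h k₁ k₂
    apply huniq
    have h2 := (hT h k₁).add (hT h k₂)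
    refine h2.congr ?_
    intro t
    rw [hexpradd]
  -- A-linearity in the second (evaluation) slot of expr
  have hevU : ∀ h : X, ∀ᶠ t : ℂ in 𝓝[≠] (0:ℂ), z₀ + t • h ∈ U := by
    intro h
    have hb : 0 < δ / (‖h‖ + 1) := by positivity
    have h1 : ∀ᶠ t : ℂ in 𝓝 (0:ℂ), z₀ + t • h ∈ U := by
      filter_upwards [Metric.ball_mem_nhds (0:ℂ) hb] with t ht
      rw [mem_ball, dist_zero_right] at ht
      apply hδU
      rw [mem_closedBall, dist_eq_norm]
      have he : z₀ + t • h - z₀ = t • h := by abel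
      rw [he, norm_smul]
      have h3 : ‖t‖ * ‖h‖ ≤ ‖t‖ * (‖h‖ + 1) := by
        apply mul_le_mul_of_nonneg_left (by linarith) (norm_nonneg t)
      have h4 : ‖t‖ * (‖h‖ + 1) < δ := by
        rw [← lt_div_iff₀ (by positivity)]
        exact ht
      linarith
    exact eventually_nhdsWithin_of_eventually_nhds h1
  have hTa : ∀ (h : X) (a : A) (k : X), T h (a • k) = a • T h k := by
    intro h a k
    apply huniq
    have h2 := (hT h k).const_smul a
    refine h2.congr' ?_
    filter_upwards [hevU h] with t ht
    show a • expr h k t = expr h (a • k) t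
    simp only [hexprdef]
    rw [hlin _ ht a k, hlin _ hz₀ a k, ← smul_sub, smul_comm]
  -- linearity in the first slot
  have hTadd1 : ∀ (h₁ h₂ k : X), T (h₁ + h₂) k = T h₁ k + T h₂ k := by
    intro h₁ h₂ k
    rcases eq_or_ne k 0 with rfl | hk0
    · simp [hTzero]
    obtain ⟨c, hc0, hck, hck0⟩ := hscale k hk0
    have hbase : ∀ h : X, T h k = c⁻¹ • T h (c • k) := by
      intro h
      rw [hTsmul2, smul_smul, inv_mul_cancel₀ hc0, one_smul]
    rw [hbase, hbase, hbase, ← smul_add]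
    congr 1
    have hckpos : 0 < ‖c • k‖ := norm_pos_iff.2 hck0
    have hballpos : 0 < 3*δ/8/‖c • k‖ := by positivity
    have hd : ∀ h : X, DifferentiableAt ℂ (fun s : ℂ => fderiv ℂ f (z₀ + s • (c • k)) h) 0 := by
      intro h
      exact ((hmain h (c • k) hck0 hck.le).2.1).differentiableAt
        (isOpen_ball.mem_nhds (mem_ball_self hballpos))
    rw [hTderiv _ _ hck0 hck.le, hTderiv _ _ hck0 hck.le, hTderiv _ _ hck0 hck.le]
    have he : (fun s : ℂ => fderiv ℂ f (z₀ + s • (c • k)) (h₁ + h₂))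
        = fun s : ℂ => fderiv ℂ f (z₀ + s • (c • k)) h₁
            + fderiv ℂ f (z₀ + s • (c • k)) h₂ := by
      funext s; exact map_add _ _ _
    rw [he]; exact deriv_add (hd h₁) (hd h₂)
  have hTsmul1 : ∀ (c' : ℂ) (h k : X), T (c' • h) k = c' • T h k := by
    intro c' h k
    rcases eq_or_ne k 0 with rfl | hk0
    · simp [hTzero]
    obtain ⟨c, hc0, hck, hck0⟩ := hscale k hk0
    have hbase : ∀ h : X, T h k = c⁻¹ • T h (c • k) := by
      intro h
      rw [hTsmul2, smul_smul, inv_mul_cancel₀ hc0, one_smul]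
    rw [hbase, hbase, smul_comm]
    congr 1
    have hckpos : 0 < ‖c • k‖ := norm_pos_iff.2 hck0
    have hballpos : 0 < 3*δ/8/‖c • k‖ := by positivity
    have hd : DifferentiableAt ℂ (fun s : ℂ => fderiv ℂ f (z₀ + s • (c • k)) h) 0 :=
      ((hmain h (c • k) hck0 hck.le).2.1).differentiableAt
        (isOpen_ball.mem_nhds (mem_ball_self hballpos))
    rw [hTderiv _ _ hck0 hck.le, hTderiv _ _ hck0 hck.le]
    have he : (fun s : ℂ => fderiv ℂ f (z₀ + s • (c • k)) (c' • h))
        = fun s : ℂ => c' • fderiv ℂ f (z₀ + s • (c • k)) h := by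
      funext s; exact map_smul _ _ _
    rw [he]; exact deriv_const_smul c' hd
  -- norm bound
  have hTbound : ∀ (h k : X), ‖T h k‖ ≤ 8*M/δ^2 * ‖h‖ * ‖k‖ := by
    intro h k
    rcases eq_or_ne k 0 with rfl | hk0
    · simp [hTzero]
    obtain ⟨c, hc0, hck, hck0⟩ := hscale k hk0
    have hbase : T h k = c⁻¹ • T h (c • k) := by
      rw [hTsmul2, smul_smul, inv_mul_cancel₀ hc0, one_smul]
    rw [hbase, norm_smul, norm_inv]
    have h2 : ‖T h (c • k)‖ ≤ 8*M/δ^2 * ‖h‖ * ‖c • k‖ := by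
      rw [hTderiv _ _ hck0 hck.le]
      exact (hmain h (c • k) hck0 hck.le).2.2.1
    rw [norm_smul] at h2
    have hcpos : 0 < ‖c‖ := norm_pos_iff.2 hc0
    rw [inv_mul_le_iff₀ hcpos]
    calc ‖T h (c • k)‖ ≤ 8*M/δ^2 * ‖h‖ * (‖c‖ * ‖k‖) := h2
    _ = ‖c‖ * (8*M/δ^2 * ‖h‖ * ‖k‖) := by ring
  -- the candidate second derivative
  obtain ⟨B, hBapp⟩ : ∃ B : X →L[ℂ] X →L[ℂ] Y, ∀ k h : X, B k h = T h k := by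
    refine ⟨LinearMap.mkContinuous₂
      (LinearMap.mk₂ ℂ (fun k h => T h k)
        (fun k₁ k₂ h => hTadd2 h k₁ k₂)
        (fun c k h => hTsmul2 h c k)
        (fun k h₁ h₂ => hTadd1 h₁ h₂ k)
        (fun c k h => hTsmul1 c h k)) (8*M/δ^2)
      (fun k h => ?_), fun k h => rfl⟩
    simp only [LinearMap.mk₂_apply]
    calc ‖T h k‖ ≤ 8*M/δ^2 * ‖h‖ * ‖k‖ := hTbound h k
    _ = 8*M/δ^2 * ‖k‖ * ‖h‖ := by ring
  -- Fréchet differentiability of the derivative map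
  have hG : HasFDerivAt (fun z : X => fderiv ℂ f z) B z₀ := by
    rw [hasFDerivAt_iff_isLittleO_nhds_zero, Asymptotics.isLittleO_iff]
    intro c hc
    have hr : 0 < min (δ/8) (c * δ^3 / (64*M)) := by positivity
    filter_upwards [Metric.ball_mem_nhds (0:X) hr] with k hk
    rcases eq_or_ne k 0 with rfl | hk0
    · simp
    rw [mem_ball, dist_zero_right, lt_min_iff] at hk
    refine ContinuousLinearMap.opNorm_le_bound _ (by positivity) ?_
    intro h
    have h4 := (hmain h k hk0 hk.1.le).2.2.2
    rw [← hTderiv h k hk0 hk.1.le] at h4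
    have he : (fderiv ℂ f (z₀ + k) - fderiv ℂ f z₀ - B k) h
        = fderiv ℂ f (z₀ + k) h - fderiv ℂ f z₀ h - T h k := by
      rw [ContinuousLinearMap.sub_apply, ContinuousLinearMap.sub_apply, hBapp]
    rw [he]
    refine h4.trans ?_
    have h5 : 64*M/δ^3 * ‖k‖ ≤ c := by
      have := hk.2
      rw [lt_div_iff₀ (by positivity)] at this
      rw [div_mul_eq_mul_div, div_le_iff₀ (by positivity)]
      nlinarith
    calc 64*M/δ^3 * ‖h‖ * ‖k‖^2 = (64*M/δ^3 * ‖k‖) * ‖k‖ * ‖h‖ := by ring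
    _ ≤ c * ‖k‖ * ‖h‖ := by
        apply mul_le_mul_of_nonneg_right _ (norm_nonneg h)
        apply mul_le_mul_of_nonneg_right h5 (norm_nonneg k)
  refine ⟨hG.differentiableAt, ?_⟩
  intro a h v
  rw [hG.fderiv, hBapp, hBapp, hTa]
end

section
/- Let X be a compact Hausdorff topological space, let n ∈ ℕ, and let U be a convex open subset of ℝⁿ. Let 𝒰 = {u ∈ C(X, ℝⁿ) : ∀ x ∈ X, u(x) ∈ U}, an open subset of the Banach space C(X, ℝⁿ) with the sup norm. Let F : 𝒰 → C(X, ℝ) be continuously Fréchet differentiable on 𝒰, and suppose that for every u ∈ 𝒰 the Fréchet derivative F′(u) : C(X, ℝⁿ) → C(X, ℝ) is C(X, ℝ)-linear, i.e. F′(u)(g • v) = g · (F′(u)(v)) for all g ∈ C(X, ℝ) and v ∈ C(X, ℝⁿ), where (g • v)(x) = g(x) · v(x) componentwise. Then for all u₀, u₁ ∈ 𝒰 and every x ∈ X, if u₀(x) = u₁(x) then (F(u₀))(x) = (F(u₁))(x). -/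
/-- Let `X` be a compact Hausdorff space, `n ∈ ℕ`, and `U` a convex
open subset of `ℝⁿ`.  Let `𝒰 = {u ∈ C(X, ℝⁿ) | ∀ x, u x ∈ U}`, an open subset of
the sup-norm Banach space `C(X, ℝⁿ)`.  Let `F : 𝒰 → C(X, ℝ)` be continuously
Fréchet differentiable on `𝒰` with `C(X, ℝ)`-linear derivatives
(`F′(u) (g • v) = g • (F′(u) v)` pointwise).  Then for all `u₀, u₁ ∈ 𝒰` and all
`x ∈ X`, `u₀ x = u₁ x` implies `(F u₀) x = (F u₁) x`. -/
theorem stmt_7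
    {X : Type*} [TopologicalSpace X] [CompactSpace X] [T2Space X]
    (n : ℕ) (U : Set (EuclideanSpace ℝ (Fin n))) (hUopen : IsOpen U)
    (hUconv : Convex ℝ U)
    (𝒰 : Set C(X, EuclideanSpace ℝ (Fin n)))
    (h𝒰 : 𝒰 = {u : C(X, EuclideanSpace ℝ (Fin n)) | ∀ x : X, u x ∈ U})
    (F : C(X, EuclideanSpace ℝ (Fin n)) → C(X, ℝ))
    (hdiff : ∀ u ∈ 𝒰, DifferentiableAt ℝ F u)
    (hcont : ContinuousOn (fun u => fderiv ℝ F u) 𝒰)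
    (hlin : ∀ u ∈ 𝒰, ∀ (g : C(X, ℝ)) (v : C(X, EuclideanSpace ℝ (Fin n))),
      fderiv ℝ F u (g • v) = g • (fderiv ℝ F u v)) :
    ∀ u₀ ∈ 𝒰, ∀ u₁ ∈ 𝒰, ∀ x : X, u₀ x = u₁ x → F u₀ x = F u₁ x := by
  intro u₀ hu₀ u₁ hu₁ x hx
  -- Key locality lemma: if `v x = 0` then `fderiv ℝ F u v x = 0`.
  have key : ∀ u ∈ 𝒰, ∀ v : C(X, EuclideanSpace ℝ (Fin n)), v x = 0 →
      fderiv ℝ F u v x = 0 := by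
    intro u hu v hv
    have habs : ∀ ε : ℝ, 0 < ε → |fderiv ℝ F u v x| ≤ ‖fderiv ℝ F u‖ * ε := by
      intro ε hε
      set K : Set X := {y : X | ε ≤ ‖v y‖} with hK
      have hKc : IsClosed K := isClosed_le continuous_const v.continuous.norm
      have hxK : x ∉ K := by simp [hK, hv, hε.not_ge]
      obtain ⟨g, hg0, hg1, hgmem⟩ := exists_continuous_zero_one_of_isClosed
        (isClosed_singleton (x := x)) hKc
        (by simpa [Set.disjoint_singleton_left] using hxK)
      have heq := hlin u hu ((1 : C(X, ℝ)) - g) v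
      have hval : fderiv ℝ F u (((1 : C(X, ℝ)) - g) • v) x = fderiv ℝ F u v x := by
        rw [heq]
        have hgx : g x = 0 := hg0 rfl
        rw [ContinuousMap.smul_apply']
        simp [hgx]
      have hwle : ‖((1 : C(X, ℝ)) - g) • v‖ ≤ ε := by
        refine (ContinuousMap.norm_le _ hε.le).mpr fun y => ?_
        by_cases hy : y ∈ K
        · have hgy : g y = 1 := hg1 hy
          rw [ContinuousMap.smul_apply']
          simp [hgy]
          positivity
        · have h1 : ‖v y‖ ≤ ε := le_of_not_ge hy
          have h2 : g y ∈ Set.Icc (0 : ℝ) 1 := hgmem y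
          have : ‖(((1 : C(X, ℝ)) - g) • v) y‖ = |1 - g y| * ‖v y‖ := by
            rw [ContinuousMap.smul_apply']
            simp [norm_smul, Real.norm_eq_abs]
          rw [this]
          have h3 : |1 - g y| ≤ 1 := by
            rw [abs_le]; constructor <;> [linarith [h2.2]; linarith [h2.1]]
          calc |1 - g y| * ‖v y‖ ≤ 1 * ε := by
                exact mul_le_mul h3 h1 (norm_nonneg _) zero_le_one
            _ = ε := one_mul ε
      calc |fderiv ℝ F u v x| = |fderiv ℝ F u (((1 : C(X, ℝ)) - g) • v) x| := by rw [hval]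
        _ ≤ ‖fderiv ℝ F u (((1 : C(X, ℝ)) - g) • v)‖ := by
            simpa using (fderiv ℝ F u (((1 : C(X, ℝ)) - g) • v)).norm_coe_le_norm x
        _ ≤ ‖fderiv ℝ F u‖ * ‖((1 : C(X, ℝ)) - g) • v‖ :=
            (fderiv ℝ F u).le_opNorm _
        _ ≤ ‖fderiv ℝ F u‖ * ε := by
            exact mul_le_mul_of_nonneg_left hwle (ContinuousLinearMap.opNorm_nonneg _)
    have h0 : |fderiv ℝ F u v x| ≤ 0 := by
      refine le_of_forall_pos_le_add fun δ hδ => ?_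
      have hC : (0:ℝ) ≤ ‖fderiv ℝ F u‖ := ContinuousLinearMap.opNorm_nonneg _
      have := habs (δ / (‖fderiv ℝ F u‖ + 1)) (by positivity)
      refine this.trans ?_
      rw [zero_add]
      rw [div_eq_mul_inv, ← mul_assoc]
      rw [mul_inv_le_iff₀ (by positivity)]
      nlinarith
    exact abs_eq_zero.mp (le_antisymm h0 (abs_nonneg _))
  -- The segment from `u₀` to `u₁` stays in `𝒰`.
  set w : C(X, EuclideanSpace ℝ (Fin n)) := u₁ - u₀ with hw
  set γ : ℝ → C(X, EuclideanSpace ℝ (Fin n)) := fun t => u₀ + t • w with hγ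
  have hγmem : ∀ t ∈ Set.Icc (0:ℝ) 1, γ t ∈ 𝒰 := by
    intro t ht
    rw [h𝒰]
    intro y
    have hval : γ t y = (1 - t) • u₀ y + t • u₁ y := by
      simp [hγ, hw, smul_sub, sub_smul]
      abel
    rw [hval]
    exact hUconv (by rw [h𝒰] at hu₀; exact hu₀ y) (by rw [h𝒰] at hu₁; exact hu₁ y)
      (by linarith [ht.2]) ht.1 (by ring)
  have hwx : w x = 0 := by simp [hw, hx]
  set φ : ℝ → ℝ := fun t => F (γ t) x with hφ
  have hderiv : ∀ t ∈ Set.Icc (0:ℝ) 1, HasDerivAt φ 0 t := by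
    intro t ht
    have h1 : HasDerivAt γ w t := by
      simpa [hγ] using ((hasDerivAt_id t).smul_const w).const_add u₀
    have h2 : HasDerivAt (fun t => F (γ t)) (fderiv ℝ F (γ t) w) t :=
      (hdiff (γ t) (hγmem t ht)).hasFDerivAt.comp_hasDerivAt t h1
    have h3 := (ContinuousMap.evalCLM ℝ x).hasFDerivAt.comp_hasDerivAt t h2
    have hz : (ContinuousMap.evalCLM ℝ x) (fderiv ℝ F (γ t) w) = 0 :=
      key (γ t) (hγmem t ht) w hwx
    rw [hz] at h3
    exact h3
  have hcontφ : ContinuousOn φ (Set.Icc (0:ℝ) 1) :=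
    fun t ht => (hderiv t ht).continuousAt.continuousWithinAt
  have hconst := constant_of_has_deriv_right_zero hcontφ
    (fun t ht => ((hderiv t (Set.mem_Icc_of_Ico ht)).hasDerivWithinAt))
  have h10 : φ 1 = φ 0 := hconst 1 (Set.right_mem_Icc.mpr zero_le_one)
  have hγ0 : γ 0 = u₀ := by
    ext y
    simp [hγ]
  have hγ1 : γ 1 = u₁ := by
    ext y
    simp [hγ, hw]
  have : F u₁ x = F u₀ x := by
    rw [← hγ0, ← hγ1]
    simpa [hφ] using h10
  exact this.symm
end

section
/- Let X be a compact Hausdorff topological space, let n ∈ ℕ, and let U be a convex open subset of ℝⁿ. Let 𝒰 = {u ∈ C(X, ℝⁿ) : ∀ x ∈ X, u(x) ∈ U}. Let F : 𝒰 → C(X, ℝ) be continuously Fréchet differentiable on 𝒰 such that for every u ∈ 𝒰 the Fréchet derivative F′(u) : C(X, ℝⁿ) → C(X, ℝ) is C(X, ℝ)-linear (F′(u)(g • v) = g · (F′(u)(v)) for all g ∈ C(X, ℝ), v ∈ C(X, ℝⁿ)). Then there exists a function f : X × U → ℝ such that for every u ∈ 𝒰 and every x ∈ X, (F(u))(x)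 = f(x, u(x)). -/
set_option maxHeartbeats 1000000 in
/-- Let `X` be a compact Hausdorff space, `n ∈ ℕ`, and `U` a convex
open subset of `ℝⁿ`.  Let `𝒰 = {u ∈ C(X, ℝⁿ) | ∀ x, u x ∈ U}`.  Let
`F : 𝒰 → C(X, ℝ)` be continuously Fréchet differentiable on `𝒰` with
`C(X, ℝ)`-linear derivatives.  Then there exists a function `f : X × U → ℝ`
such that `(F u) x = f (x, u x)` for every `u ∈ 𝒰` and `x ∈ X`. -/
theorem stmt_8
    {X : Type*} [TopologicalSpace X] [CompactSpace X] [T2Space X]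
    (n : ℕ) (U : Set (EuclideanSpace ℝ (Fin n))) (hUopen : IsOpen U)
    (hUconv : Convex ℝ U)
    (𝒰 : Set C(X, EuclideanSpace ℝ (Fin n)))
    (h𝒰 : 𝒰 = {u : C(X, EuclideanSpace ℝ (Fin n)) | ∀ x : X, u x ∈ U})
    (F : C(X, EuclideanSpace ℝ (Fin n)) → C(X, ℝ))
    (hdiff : ∀ u ∈ 𝒰, DifferentiableAt ℝ F u)
    (hcont : ContinuousOn (fun u => fderiv ℝ F u) 𝒰)
    (hlin : ∀ u ∈ 𝒰, ∀ (g : C(X, ℝ)) (v : C(X, EuclideanSpace ℝ (Fin n))),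
      fderiv ℝ F u (g • v) = g • (fderiv ℝ F u v)) :
    ∃ f : X × U → ℝ, ∀ u (hu : u ∈ 𝒰) (x : X),
      F u x = f (x, ⟨u x, by rw [h𝒰] at hu; exact hu x⟩) := by
  have key : ∀ w ∈ 𝒰, ∀ (v : C(X, EuclideanSpace ℝ (Fin n))) (x : X),
      v x = 0 → fderiv ℝ F w v x = 0 := by
    intro w hw v x hvx
    set T := fderiv ℝ F w with hT
    have hbound : ∀ ε : ℝ, 0 < ε → |T v x| ≤ (‖T‖ + 1) * ε := by
      intro ε hε
      set g : C(X, ℝ) := ⟨fun y => min 1 (‖v y‖ / ε), by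
        exact (continuous_const.min ((continuous_norm.comp v.continuous).div_const ε))⟩ with hg
      have hgx : g x = 0 := by
        simp [hg, hvx]
      have hgy : ∀ y, 0 ≤ g y ∧ g y ≤ 1 := by
        intro y
        exact ⟨le_min zero_le_one (by positivity), min_le_left _ _⟩
      have hnorm : ‖v - g • v‖ ≤ ε := by
        rw [ContinuousMap.norm_le _ hε.le]
        intro y
        have e1 : (v - g • v) y = v y - g y • v y := rfl
        have e2 : v y - g y • v y = (1 - g y) • v y := by
          rw [sub_smul, one_smul]
        rw [e1, e2, norm_smul, Real.norm_eq_abs,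
          abs_of_nonneg (by linarith [(hgy y).2])]
        rcases le_or_gt (‖v y‖) ε with h | h
        · nlinarith [(hgy y).1, (hgy y).2, norm_nonneg (v y)]
        · have : g y = 1 := by
            simp only [hg, ContinuousMap.coe_mk]
            exact min_eq_left ((one_le_div hε).mpr h.le)
          rw [this]; simpa using hε.le
      have h1 : T (g • v) x = 0 := by
        rw [hlin w hw g v]
        have e : (g • T v) x = g x * (T v) x := rfl
        rw [e, hgx, zero_mul]
      have h2 : T v x = T (v - g • v) x := by
        rw [map_sub]
        have e : (T v - T (g • v)) x = T v x - T (g • v) x := rfl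
        rw [e, h1, sub_zero]
      rw [h2]
      calc |T (v - g • v) x| ≤ ‖T (v - g • v)‖ := by
            simpa using ContinuousMap.norm_coe_le_norm (T (v - g • v)) x
        _ ≤ ‖T‖ * ‖v - g • v‖ := T.le_opNorm _
        _ ≤ (‖T‖ + 1) * ε := by
            have := norm_nonneg T
            nlinarith [norm_nonneg (v - g • v)]
    have habs : |T v x| ≤ 0 := by
      refine le_of_forall_pos_le_add ?_
      intro δ hδ
      have hN : (0:ℝ) < ‖T‖ + 1 := by positivity
      have := hbound (δ / (‖T‖ + 1)) (by positivity)
      rw [mul_div_cancel₀ _ hN.ne'] at this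
      linarith
    exact abs_eq_zero.mp (le_antisymm habs (abs_nonneg _))
  refine ⟨fun q => F (ContinuousMap.const X (q.2 : EuclideanSpace ℝ (Fin n))) q.1, ?_⟩
  intro u hu x
  have huU : ∀ y, u y ∈ U := by rw [h𝒰] at hu; exact hu
  set c : C(X, EuclideanSpace ℝ (Fin n)) := ContinuousMap.const X (u x) with hc
  set v : C(X, EuclideanSpace ℝ (Fin n)) := c - u with hv
  set γ : ℝ → C(X, EuclideanSpace ℝ (Fin n)) := fun t => u + t • v with hγ
  have hγapp : ∀ t y, (γ t) y = u y + t • (u x - u y) := by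
    intro t y
    simp only [hγ, hv, hc, ContinuousMap.add_apply, ContinuousMap.smul_apply,
      ContinuousMap.sub_apply, ContinuousMap.const_apply]
  have hγmem : ∀ t ∈ Set.Icc (0:ℝ) 1, γ t ∈ 𝒰 := by
    intro t ht
    rw [h𝒰]
    intro y
    rw [hγapp t y]
    have e : u y + t • (u x - u y) = (1 - t) • u y + t • u x := by module
    rw [e]
    exact hUconv (huU y) (huU x) (by linarith [ht.2]) ht.1 (by ring)
  have hvx : v x = 0 := by
    simp [hv, hc]
  set h : ℝ → ℝ := fun t => F (γ t) x with hh
  have hderiv : ∀ t ∈ Set.Icc (0:ℝ) 1, HasDerivAt h 0 t := by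
    intro t ht
    have hγd : HasDerivAt γ v t := by
      have h1 : HasDerivAt (fun s : ℝ => s • v) ((1:ℝ) • v) t :=
        (hasDerivAt_id t).smul_const v
      simpa [hγ] using h1.const_add u
    have hF : HasFDerivAt F (fderiv ℝ F (γ t)) (γ t) :=
      (hdiff _ (hγmem t ht)).hasFDerivAt
    have hcomp : HasDerivAt (fun s => F (γ s)) (fderiv ℝ F (γ t) v) t :=
      hF.comp_hasDerivAt t hγd
    have heval : HasDerivAt h (((ContinuousMap.evalCLM (M := ℝ) ℝ x))
        (fderiv ℝ F (γ t) v)) t := by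
      have hc2 := ((ContinuousMap.evalCLM (M := ℝ) ℝ x)).hasFDerivAt.comp_hasDerivAt t hcomp
      exact hc2
    have hz : ((ContinuousMap.evalCLM (M := ℝ) ℝ x)) (fderiv ℝ F (γ t) v) = 0 :=
      key _ (hγmem t ht) v x hvx
    rwa [hz] at heval
  have hconstfn := constant_of_has_deriv_right_zero
    (f := h) (a := (0:ℝ)) (b := 1)
    (fun t ht => (hderiv t ht).continuousAt.continuousWithinAt)
    (fun t ht => ((hderiv t (Set.mem_Icc_of_Ico ht)).hasDerivWithinAt))
  have h10 : h 1 = h 0 := hconstfn 1 (Set.right_mem_Icc.mpr zero_le_one)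
  have hγ0 : γ 0 = u := by
    ext y; rw [hγapp]; simp
  have hγ1 : γ 1 = c := by
    ext y; rw [hγapp]; simp [hc]
  have e1 : F (γ 1) x = F (γ 0) x := h10
  rw [hγ0, hγ1] at e1
  exact e1.symm
end

section
/- Let X and Y be complex Banach spaces, let U ⊆ X be open, and let f : X → Y be Fréchet differentiable (over ℂ) on U. Let z ∈ U and v ∈ X be such that z + λ • v ∈ U for every λ ∈ ℂ with |λ| ≤ 1. Then the directional derivative of f at z in the direction v is given by the Cauchy-type integral formula (fderiv ℂ f z) v = (1/(2π)) ∫₀^{2π} e^{−iθ} • f(z + e^{iθ} • v) dθ. -/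
open Complex Real

/-- Let `X`, `Y` be complex Banach spaces, `U ⊆ X` open, and let
`f : X → Y` be Fréchet differentiable over `ℂ` on `U`.  Let `z ∈ U` and `v ∈ X`
be such that `z + λ • v ∈ U` for every `λ ∈ ℂ` with `|λ| ≤ 1`.  Then
`(fderiv ℂ f z) v = (1 / (2π)) ∫₀^{2π} e^{-iθ} • f (z + e^{iθ} • v) dθ`. -/
theorem stmt_9
    {X : Type*} [NormedAddCommGroup X] [NormedSpace ℂ X] [CompleteSpace X]
    {Y : Type*} [NormedAddCommGroup Y] [NormedSpace ℂ Y] [CompleteSpace Y]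
    (U : Set X) (hU : IsOpen U) (f : X → Y)
    (hf : ∀ w ∈ U, DifferentiableAt ℂ f w)
    (z : X) (hz : z ∈ U) (v : X)
    (hv : ∀ lam : ℂ, ‖lam‖ ≤ 1 → z + lam • v ∈ U) :
    fderiv ℂ f z v = (1 / (2 * π)) •
      ∫ θ in (0 : ℝ)..(2 * π),
        Complex.exp (-(θ : ℂ) * Complex.I) • f (z + Complex.exp ((θ : ℂ) * Complex.I) • v) := by
  set g : ℂ → Y := fun lam => f (z + lam • v) with hg
  have hdiff : ∀ lam : ℂ, ‖lam‖ ≤ 1 → DifferentiableAt ℂ g lam := by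
    intro lam hlam
    have h1 : DifferentiableAt ℂ (fun lam : ℂ => z + lam • v) lam :=
      (differentiableAt_const _).add ((differentiableAt_fun_id).smul_const v)
    exact (hf _ (hv lam hlam)).comp lam h1
  have hcl : DiffContOnCl ℂ g (Metric.ball (0 : ℂ) 1) := by
    refine ⟨fun w hw => (hdiff w ?_).differentiableWithinAt, fun w hw => (hdiff w ?_).continuousAt.continuousWithinAt⟩
    · simpa using (Metric.mem_ball.1 hw).le
    · have : w ∈ Metric.closedBall (0 : ℂ) 1 := by
        simpa using Metric.closure_ball_subset_closedBall hw
      simpa using Metric.mem_closedBall.1 this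
  have hderiv : HasDerivAt g (fderiv ℂ f z v) 0 := by
    have h1 : HasDerivAt (fun lam : ℂ => z + lam • v) v 0 := by
      simpa using (((hasDerivAt_id (0:ℂ)).smul_const v).const_add z)
    have h2 : HasFDerivAt f (fderiv ℂ f z) ((fun lam : ℂ => z + lam • v) 0) := by
      simpa using (hf z hz).hasFDerivAt
    exact h2.comp_hasDerivAt (x := (0:ℂ)) h1
  have key : deriv g 0 = (2 * π * I : ℂ)⁻¹ • ∮ z in C(0, 1), (z - 0) ^ (-2 : ℤ) • g z := by
    have h := hcl.deriv_eq_smul_circleIntegral (c := 0) (R := 1) one_pos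
    have e : ∀ z : ℂ, (z - 0) ^ (-2 : ℤ) = 1 / (z - 0) ^ 2 := fun z => by
      rw [zpow_neg, one_div]; norm_cast
    simp_rw [e]
    rw [h, smul_smul, inv_mul_cancel₀ two_pi_I_ne_zero, one_smul]
  rw [hderiv.deriv] at key
  rw [key]
  rw [circleIntegral]
  have : ∀ θ : ℝ, deriv (circleMap 0 1) θ • ((circleMap 0 1 θ - 0) ^ (-2 : ℤ)) • g (circleMap 0 1 θ)
      = Complex.I • (Complex.exp (-(θ : ℂ) * Complex.I) • f (z + Complex.exp ((θ : ℂ) * Complex.I) • v)) := by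
    intro θ
    rw [deriv_circleMap]
    simp only [circleMap, ofReal_one, one_mul, sub_zero, smul_smul]
    congr 1
    rw [zero_add, show ((cexp ((θ:ℂ)*Complex.I)) ^ (-2:ℤ)) = cexp (-(2*θ)*Complex.I) by
      rw [← Complex.exp_int_mul]; norm_num; ring_nf]
    rw [mul_right_comm, ← Complex.exp_add, mul_comm]
    ring_nf
    simp only [zero_add]
    rfl
  simp only [this]
  rw [intervalIntegral.integral_smul, smul_smul]
  rw [← Complex.coe_smul]
  congr 1
  have hπ : (π : ℂ) ≠ 0 := by exact_mod_cast Real.pi_ne_zero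
  push_cast
  field_simp
end

section
/- Let X and Y be complex Banach spaces, let U ⊆ X be open, and let f : X → Y be Fréchet differentiable (over ℂ) on U. Let z₀ ∈ U and v ∈ X be such that z₀ + λ • v ∈ U for every λ ∈ ℂ with |λ| ≤ 1. Then the map G : U → (X →L[ℂ] Y), G(z) = fderiv ℂ f z, is Fréchet differentiable at z₀, and for every h ∈ X one has ((fderiv ℂ G z₀) h) v = (1/(2π)) ∫₀^{2π} e^{−iθ} • ((fderiv ℂ f (z₀ + e^{iθ} • v)) h) dθ. -/
open Complex Real Metric MeasureTheory Set

set_option linter.unusedSectionVars false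
set_option linter.unreachableTactic false
set_option linter.unusedTactic false
set_option maxHeartbeats 1600000

section OneVar
variable {Y : Type*} [NormedAddCommGroup Y] [NormedSpace ℂ Y] [CompleteSpace Y]

lemma hps_of_diff (g : ℂ → Y) {ρ : ℝ} (hρ : 0 < ρ)
    (hg : ∀ z ∈ closedBall (0:ℂ) ρ, DifferentiableAt ℂ g z) :
    HasFPowerSeriesOnBall g (cauchyPowerSeries g 0 ρ) 0 (ENNReal.ofReal ρ) := by
  have h1 : DiffContOnCl ℂ g (ball (0:ℂ) ρ) := by
    refine ⟨fun z hz => (hg z (ball_subset_closedBall hz)).differentiableWithinAt, ?_⟩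
    rw [closure_ball _ hρ.ne']
    exact fun z hz => (hg z hz).continuousAt.continuousWithinAt
  have hcoe : (ρ.toNNReal : ℝ) = ρ := Real.coe_toNNReal ρ hρ.le
  rw [← hcoe] at h1
  have h2 := h1.hasFPowerSeriesOnBall (R := ρ.toNNReal) (by simpa using hρ)
  rw [hcoe] at h2
  exact h2

lemma coeff_bound (g : ℂ → Y) {ρ K : ℝ} (hρ : 0 < ρ)
    (hg : ∀ z ∈ closedBall (0:ℂ) ρ, DifferentiableAt ℂ g z)
    (hK : ∀ z ∈ closedBall (0:ℂ) ρ, ‖g z‖ ≤ K) (n : ℕ) :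
    ‖(cauchyPowerSeries g 0 ρ).coeff n‖ ≤ K / ρ ^ n := by
  have h1 := norm_cauchyPowerSeries_le g 0 ρ n
  rw [FormalMultilinearSeries.norm_apply_eq_norm_coef] at h1
  have hmem : ∀ θ : ℝ, circleMap 0 ρ θ ∈ closedBall (0:ℂ) ρ := fun θ =>
    sphere_subset_closedBall (circleMap_mem_sphere 0 hρ.le θ)
  have hc : Continuous fun θ : ℝ => g (circleMap 0 ρ θ) := by
    rw [continuous_iff_continuousAt]
    exact fun θ => ((hg _ (hmem θ)).continuousAt).comp (continuous_circleMap 0 ρ).continuousAt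
  have hint : (∫ θ in (0:ℝ)..2*π, ‖g (circleMap 0 ρ θ)‖) ≤ 2 * π * K := by
    have := intervalIntegral.integral_mono_on Real.two_pi_pos.le
      (hc.norm.intervalIntegrable 0 (2*π))
      (intervalIntegrable_const : IntervalIntegrable (fun _ => K) volume 0 (2*π))
      (fun θ _ => hK _ (hmem θ))
    simpa using this
  have hK0 : 0 ≤ K := le_trans (norm_nonneg _) (hK 0 (mem_closedBall_self hρ.le))
  calc ‖(cauchyPowerSeries g 0 ρ).coeff n‖
      ≤ ((2*π)⁻¹ * ∫ θ in (0:ℝ)..2*π, ‖g (circleMap 0 ρ θ)‖) * |ρ|⁻¹ ^ n := h1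
    _ ≤ ((2*π)⁻¹ * (2*π*K)) * |ρ|⁻¹ ^ n := by
        refine mul_le_mul_of_nonneg_right
          (mul_le_mul_of_nonneg_left hint (by positivity)) (by positivity)
    _ = K / ρ ^ n := by
        rw [abs_of_pos hρ, inv_mul_cancel_left₀ Real.two_pi_pos.ne']
        rw [inv_pow, div_eq_mul_inv]

lemma deriv_bound (g : ℂ → Y) {ρ K : ℝ} (hρ : 0 < ρ)
    (hg : ∀ z ∈ closedBall (0:ℂ) ρ, DifferentiableAt ℂ g z)
    (hK : ∀ z ∈ closedBall (0:ℂ) ρ, ‖g z‖ ≤ K) :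
    ‖deriv g 0‖ ≤ K / ρ := by
  have h := (hps_of_diff g hρ hg).hasFPowerSeriesAt.deriv
  rw [h]
  simpa using coeff_bound g hρ hg hK 1

lemma taylor_bound (g : ℂ → Y) {ρ K : ℝ} (hρ : 0 < ρ)
    (hg : ∀ z ∈ closedBall (0:ℂ) ρ, DifferentiableAt ℂ g z)
    (hK : ∀ z ∈ closedBall (0:ℂ) ρ, ‖g z‖ ≤ K) {μ : ℂ} (hμ : ‖μ‖ < ρ) :
    ‖g μ - g 0 - μ • deriv g 0‖ ≤
      K * (‖μ‖ / ρ) ^ 2 / (1 - ‖μ‖ / ρ) := by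
  have hK0 : 0 ≤ K := le_trans (norm_nonneg _) (hK 0 (mem_closedBall_self hρ.le))
  have hps := hps_of_diff g hρ hg
  set p := cauchyPowerSeries g 0 ρ with hp
  have hmem : μ ∈ Metric.eball (0:ℂ) (ENNReal.ofReal ρ) := by
    rw [Metric.mem_eball, edist_zero_right, ← ofReal_norm]
    exact ENNReal.ofReal_lt_ofReal_iff_of_nonneg (norm_nonneg _) |>.2 hμ
  have h2 : HasSum (fun n : ℕ => μ ^ n • p.coeff n) (g μ) := by
    have := hps.hasSum hmem
    simpa only [FormalMultilinearSeries.apply_eq_pow_smul_coeff, zero_add] using this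
  have h3 : HasSum (fun n : ℕ => μ ^ (n+2) • p.coeff (n+2))
      (g μ - ∑ i ∈ Finset.range 2, μ ^ i • p.coeff i) :=
    (hasSum_nat_add_iff' 2).2 h2
  have hc0 : p.coeff 0 = g 0 := hps.coeff_zero fun _ => 1
  have hc1 : p.coeff 1 = deriv g 0 := (hps.hasFPowerSeriesAt.deriv).symm
  have hsum2 : (∑ i ∈ Finset.range 2, μ ^ i • p.coeff i) = g 0 + μ • deriv g 0 := by
    rw [Finset.sum_range_succ, Finset.sum_range_one, hc0, hc1]
    simp
  rw [hsum2] at h3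
  set q := ‖μ‖ / ρ with hq
  have hq0 : 0 ≤ q := by positivity
  have hq1 : q < 1 := (div_lt_one hρ).2 hμ
  have hb : ∀ n : ℕ, ‖μ ^ (n+2) • p.coeff (n+2)‖ ≤ K * q ^ 2 * q ^ n := by
    intro n
    rw [norm_smul, norm_pow]
    calc ‖μ‖ ^ (n+2) * ‖p.coeff (n+2)‖
        ≤ ‖μ‖ ^ (n+2) * (K / ρ ^ (n+2)) := by
          refine mul_le_mul_of_nonneg_left (coeff_bound g hρ hg hK (n+2)) (by positivity)
      _ = K * q ^ 2 * q ^ n := by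
          have hρ' : ρ ≠ 0 := hρ.ne'
          rw [hq, div_pow, div_pow]
          field_simp
          ring
  have hsummg : Summable (fun n : ℕ => K * q ^ 2 * q ^ n) :=
    (summable_geometric_of_lt_one hq0 hq1).mul_left _
  have hsumm : Summable (fun n : ℕ => ‖μ ^ (n+2) • p.coeff (n+2)‖) :=
    Summable.of_nonneg_of_le (fun n => norm_nonneg _) hb hsummg
  have heq : g μ - g 0 - μ • deriv g 0 = ∑' n : ℕ, μ ^ (n+2) • p.coeff (n+2) := by
    rw [h3.tsum_eq, sub_sub]
  rw [heq]
  calc ‖∑' n : ℕ, μ ^ (n+2) • p.coeff (n+2)‖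
      ≤ ∑' n : ℕ, ‖μ ^ (n+2) • p.coeff (n+2)‖ := norm_tsum_le_tsum_norm hsumm
    _ ≤ ∑' n : ℕ, K * q ^ 2 * q ^ n := Summable.tsum_le_tsum hb hsumm hsummg
    _ = K * q ^ 2 * (1 - q)⁻¹ := by
        rw [tsum_mul_left, tsum_geometric_of_lt_one hq0 hq1]
    _ = K * q ^ 2 / (1 - q) := by rw [div_eq_mul_inv]

lemma cauchy_deriv_eq (g : ℂ → Y) {ρ : ℝ} (hρ : 0 < ρ)
    (hg : ∀ z ∈ closedBall (0:ℂ) ρ, DifferentiableAt ℂ g z) :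
    deriv g 0 = (2*π : ℝ)⁻¹ •
      ∫ θ in (0:ℝ)..2*π, (circleMap 0 ρ θ)⁻¹ • g (circleMap 0 ρ θ) := by
  have h := (hps_of_diff g hρ hg).hasFPowerSeriesAt.deriv
  rw [h]
  rw [cauchyPowerSeries_apply]
  rw [circleIntegral]
  have hA : ∀ θ : ℝ, deriv (circleMap 0 ρ) θ •
      ((1 / (circleMap 0 ρ θ - 0)) ^ 1 • (circleMap 0 ρ θ - 0)⁻¹ • g (circleMap 0 ρ θ))
      = I • ((circleMap 0 ρ θ)⁻¹ • g (circleMap 0 ρ θ)) := by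
    intro θ
    have h0 : circleMap 0 ρ θ ≠ 0 := circleMap_ne_center hρ.ne'
    rw [deriv_circleMap, sub_zero, pow_one, smul_smul, smul_smul, smul_smul]
    congr 1
    field_simp
  simp only [hA]
  rw [intervalIntegral.integral_smul, smul_smul]
  have : (2 * ↑π * I)⁻¹ * I = ((2*π:ℝ)⁻¹ : ℂ) := by
    field_simp [Real.pi_ne_zero, Complex.I_ne_zero]
    push_cast
    ring
  rw [this]
  rw [← Complex.ofReal_inv]
  rw [Complex.coe_smul]

end OneVar

section Holo
variable {X : Type*} [NormedAddCommGroup X] [NormedSpace ℂ X] [CompleteSpace X]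
  {Y : Type*} [NormedAddCommGroup Y] [NormedSpace ℂ Y] [CompleteSpace Y]
  {U : Set X} {f : X → Y}

variable {X : Type*} [NormedAddCommGroup X] [NormedSpace ℂ X] [CompleteSpace X]
  {Y : Type*} [NormedAddCommGroup Y] [NormedSpace ℂ Y] [CompleteSpace Y]
  {U : Set X} {f : X → Y}

lemma line_hasDerivAt (hf : ∀ w ∈ U, DifferentiableAt ℂ f w) {z : X} (h : X) {t : ℂ}
    (hz : z + t • h ∈ U) :
    HasDerivAt (fun s : ℂ => f (z + s • h)) (fderiv ℂ f (z + t • h) h) t := by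
  have h1 : HasDerivAt (fun s : ℂ => z + s • h) h t := by
    simpa using ((hasDerivAt_id t).smul_const h).const_add z
  exact (hf _ hz).hasFDerivAt.comp_hasDerivAt t h1

lemma opb (hf : ∀ w ∈ U, DifferentiableAt ℂ f w) {c : X} {r M : ℝ} (hr : 0 < r)
    (hsub : closedBall c (2*r) ⊆ U) (hM : ∀ z ∈ closedBall c (2*r), ‖f z‖ ≤ M) :
    ∀ z ∈ closedBall c r, ∀ h : X, ‖fderiv ℂ f z h‖ ≤ M / r * ‖h‖ := by
  have hM0 : 0 ≤ M := le_trans (norm_nonneg _) (hM c (mem_closedBall_self (by positivity)))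
  intro z hz h
  by_cases hh : h = 0
  · simp [hh]
  have hhn : 0 < ‖h‖ := norm_pos_iff.2 hh
  set ρ := r / ‖h‖ with hρdef
  have hρ : 0 < ρ := by positivity
  have hmem : ∀ t : ℂ, t ∈ closedBall (0:ℂ) ρ → z + t • h ∈ closedBall c (2*r) := by
    intro t ht
    rw [mem_closedBall] at hz ⊢
    calc dist (z + t•h) c ≤ dist (z+t•h) z + dist z c := dist_triangle _ _ _
      _ ≤ r + r := by
          refine add_le_add ?_ hz
          rw [dist_eq_norm, add_sub_cancel_left, norm_smul]
          have ht' : ‖t‖ ≤ ρ := mem_closedBall_zero_iff.1 ht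
          calc ‖t‖ * ‖h‖ ≤ ρ * ‖h‖ := by gcongr
            _ = r := div_mul_cancel₀ _ hhn.ne'
      _ = 2*r := by ring
  have hd : ∀ t ∈ closedBall (0:ℂ) ρ,
      HasDerivAt (fun s : ℂ => f (z + s • h)) (fderiv ℂ f (z+t•h) h) t :=
    fun t ht => line_hasDerivAt hf h (hsub (hmem t ht))
  have h0 := deriv_bound (fun s : ℂ => f (z + s•h)) hρ
    (fun t ht => (hd t ht).differentiableAt) (fun t ht => hM _ (hmem t ht))
  have hder : deriv (fun s : ℂ => f (z + s•h)) 0 = fderiv ℂ f z h := by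
    have := (hd 0 (mem_closedBall_self hρ.le)).deriv
    simpa using this
  rw [hder] at h0
  calc ‖fderiv ℂ f z h‖ ≤ M / ρ := h0
    _ = M / r * ‖h‖ := by rw [hρdef, div_div_eq_mul_div, mul_div_assoc, mul_comm]; ring

lemma opb_norm (hf : ∀ w ∈ U, DifferentiableAt ℂ f w) {c : X} {r M : ℝ} (hr : 0 < r)
    (hsub : closedBall c (2*r) ⊆ U) (hM : ∀ z ∈ closedBall c (2*r), ‖f z‖ ≤ M) :
    ∀ z ∈ closedBall c r, ‖fderiv ℂ f z‖ ≤ M / r := by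
  have hM0 : 0 ≤ M := le_trans (norm_nonneg _) (hM c (mem_closedBall_self (by positivity)))
  intro z hz
  exact ContinuousLinearMap.opNorm_le_bound _ (by positivity) (opb hf hr hsub hM z hz)

lemma lipG (hf : ∀ w ∈ U, DifferentiableAt ℂ f w) {c : X} {r M : ℝ} (hr : 0 < r)
    (hsub : closedBall c (8*r) ⊆ U) (hM : ∀ z ∈ closedBall c (8*r), ‖f z‖ ≤ M) :
    ∀ z₁ ∈ closedBall c r, ∀ z₂ ∈ closedBall c r,
      ‖fderiv ℂ f z₁ - fderiv ℂ f z₂‖ ≤ M / r^2 * ‖z₁ - z₂‖ := by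
  have hM0 : 0 ≤ M := le_trans (norm_nonneg _) (hM c (mem_closedBall_self (by positivity)))
  have h8 : closedBall c (2*(4*r)) ⊆ U := by
    rw [show 2*(4*r) = 8*r by ring]; exact hsub
  have hM8 : ∀ z ∈ closedBall c (2*(4*r)), ‖f z‖ ≤ M := by
    rw [show 2*(4*r) = 8*r by ring]; exact hM
  have hopb := opb_norm hf (by positivity : (0:ℝ) < 4*r) h8 hM8
  -- f is Lipschitz on closedBall c (4r)
  have hlipf : ∀ x ∈ closedBall c (4*r), ∀ y ∈ closedBall c (4*r),
      ‖f x - f y‖ ≤ M / (4*r) * ‖x - y‖ := by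
    intro x hx y hy
    refine (convex_closedBall c (4*r)).norm_image_sub_le_of_norm_hasFDerivWithin_le
      (fun z hz => (hf z (hsub ?_)).hasFDerivAt.hasFDerivWithinAt)
      (fun z hz => hopb z hz) hy hx
    exact closedBall_subset_closedBall (by linarith) hz
  intro z₁ h1 z₂ h2
  set d := z₁ - z₂ with hd
  have hdn : ‖d‖ ≤ 2*r := by
    rw [hd]
    calc ‖z₁ - z₂‖ ≤ ‖z₁ - c‖ + ‖c - z₂‖ := norm_sub_le_norm_sub_add_norm_sub _ _ _
      _ ≤ r + r := add_le_add (mem_closedBall_iff_norm.1 h1)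
          (by rw [norm_sub_rev]; exact mem_closedBall_iff_norm.1 h2)
      _ = 2*r := by ring
  refine ContinuousLinearMap.opNorm_le_bound _ (by positivity) (fun h => ?_)
  by_cases hh : h = 0
  · simp [hh]
  have hhn : 0 < ‖h‖ := norm_pos_iff.2 hh
  set ρ := r / ‖h‖ with hρdef
  have hρ : 0 < ρ := by positivity
  have hmem2 : ∀ t : ℂ, t ∈ closedBall (0:ℂ) ρ → z₂ + t • h ∈ closedBall c (2*r) := by
    intro t ht
    rw [mem_closedBall] at h2 ⊢
    calc dist (z₂ + t•h) c ≤ dist (z₂+t•h) z₂ + dist z₂ c := dist_triangle _ _ _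
      _ ≤ r + r := by
          refine add_le_add ?_ h2
          rw [dist_eq_norm, add_sub_cancel_left, norm_smul]
          have ht' : ‖t‖ ≤ ρ := mem_closedBall_zero_iff.1 ht
          calc ‖t‖ * ‖h‖ ≤ ρ * ‖h‖ := by gcongr
            _ = r := div_mul_cancel₀ _ hhn.ne'
      _ = 2*r := by ring
  have hmem2' : ∀ t : ℂ, t ∈ closedBall (0:ℂ) ρ → z₂ + t • h ∈ closedBall c (4*r) :=
    fun t ht => closedBall_subset_closedBall (by linarith) (hmem2 t ht)
  have hmem1 : ∀ t : ℂ, t ∈ closedBall (0:ℂ) ρ → z₂ + t • h + d ∈ closedBall c (4*r) := by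
    intro t ht
    rw [mem_closedBall] at *
    calc dist (z₂ + t•h + d) c ≤ dist (z₂+t•h+d) (z₂+t•h) + dist (z₂+t•h) c := dist_triangle _ _ _
      _ ≤ 2*r + 2*r := add_le_add (by rw [dist_eq_norm, add_sub_cancel_left]; exact hdn)
          (hmem2 t ht)
      _ = 4*r := by ring
  set g : ℂ → Y := fun t => f (z₂ + t•h + d) - f (z₂ + t•h) with hg
  have hdg : ∀ t ∈ closedBall (0:ℂ) ρ, HasDerivAt g
      (fderiv ℂ f (z₂ + t•h + d) h - fderiv ℂ f (z₂ + t•h) h) t := by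
    intro t ht
    refine HasDerivAt.sub ?_ (line_hasDerivAt hf h (hsub (closedBall_subset_closedBall
      (show (4:ℝ)*r ≤ 8*r by linarith) (hmem2' t ht))))
    have hmm' : z₂ + t • h + d ∈ U :=
      hsub (closedBall_subset_closedBall (show (4:ℝ)*r ≤ 8*r by linarith) (hmem1 t ht))
    have h2' : HasDerivAt (fun s : ℂ => z₂ + s • h + d) h t := by
      simpa using ((((hasDerivAt_id t).smul_const h).const_add z₂).add_const d)
    exact (hf _ hmm').hasFDerivAt.comp_hasDerivAt t h2'
  have hKg : ∀ t ∈ closedBall (0:ℂ) ρ, ‖g t‖ ≤ M / (4*r) * ‖d‖ := by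
    intro t ht
    exact hlipf _ (hmem1 t ht) _ (hmem2' t ht) |>.trans (by
      rw [add_sub_cancel_left])
  have h0 := deriv_bound g hρ (fun t ht => (hdg t ht).differentiableAt) hKg
  have hder : deriv g 0 = fderiv ℂ f z₁ h - fderiv ℂ f z₂ h := by
    have := (hdg 0 (mem_closedBall_self hρ.le)).deriv
    rw [this]
    congr 2 <;> simp [hd] <;> abel
  rw [hder] at h0
  calc ‖(fderiv ℂ f z₁ - fderiv ℂ f z₂) h‖ = ‖fderiv ℂ f z₁ h - fderiv ℂ f z₂ h‖ := by
        simp [ContinuousLinearMap.sub_apply]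
    _ ≤ M / (4*r) * ‖d‖ / ρ := h0
    _ = M / (4*r) * ‖d‖ * ‖h‖ / r := by rw [hρdef, div_div_eq_mul_div, mul_div_assoc]
    _ ≤ M / r^2 * ‖z₁ - z₂‖ * ‖h‖ := by
        rw [hd, show M/(4*r)*‖z₁-z₂‖*‖h‖/r = (M*‖z₁-z₂‖*‖h‖)/(4*r^2) from by ring,
          show M/r^2*‖z₁-z₂‖*‖h‖ = (M*‖z₁-z₂‖*‖h‖)/(r^2) from by ring]
        refine div_le_div_of_nonneg_left (by positivity) (by positivity) (by nlinarith)


variable {X : Type*} [NormedAddCommGroup X] [NormedSpace ℂ X] [CompleteSpace X]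
  {Y : Type*} [NormedAddCommGroup Y] [NormedSpace ℂ Y] [CompleteSpace Y]
  {U : Set X} {f : X → Y}

/-- local radius and bound -/
lemma loc_bound (hU : IsOpen U) (hf : ∀ w ∈ U, DifferentiableAt ℂ f w) {c : X} (hc : c ∈ U) :
    ∃ r M : ℝ, 0 < r ∧ 0 ≤ M ∧ closedBall c (8*r) ⊆ U ∧
      ∀ z ∈ closedBall c (8*r), ‖f z‖ ≤ M := by
  obtain ⟨ε, hε, hball⟩ := Metric.isOpen_iff.1 hU c hc
  obtain ⟨δ, hδ, hcont⟩ := Metric.continuousAt_iff.1 (hf c hc).continuousAt 1 one_pos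
  refine ⟨min ε δ / 17, ‖f c‖ + 1, by positivity, by positivity, ?_, ?_⟩
  · intro z hz
    apply hball
    rw [mem_closedBall] at hz
    rw [mem_ball]
    calc dist z c ≤ 8 * (min ε δ / 17) := hz
      _ < min ε δ := by
          have : 0 < min ε δ := lt_min hε hδ
          linarith
      _ ≤ ε := min_le_left _ _
  · intro z hz
    rw [mem_closedBall] at hz
    have hd : dist z c < δ := by
      calc dist z c ≤ 8 * (min ε δ / 17) := hz
        _ < min ε δ := by
            have : 0 < min ε δ := lt_min hε hδ
            linarith
        _ ≤ δ := min_le_right _ _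
    have := hcont hd
    rw [dist_eq_norm] at this
    calc ‖f z‖ = ‖f c + (f z - f c)‖ := by rw [add_sub_cancel]
      _ ≤ ‖f c‖ + ‖f z - f c‖ := norm_add_le _ _
      _ ≤ ‖f c‖ + 1 := by linarith

lemma contG (hU : IsOpen U) (hf : ∀ w ∈ U, DifferentiableAt ℂ f w) {c : X} (hc : c ∈ U) :
    ContinuousAt (fun z => fderiv ℂ f z) c := by
  obtain ⟨r, M, hr, hM0, hsub, hM⟩ := loc_bound hU hf hc
  refine continuousAt_of_locally_lipschitz hr (M / r^2) (fun y hy => ?_)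
  rw [dist_eq_norm, dist_eq_norm]
  exact lipG hf hr hsub hM y (ball_subset_closedBall (mem_ball.2 hy)) c
    (mem_closedBall_self hr.le)

lemma key1 (hU : IsOpen U) (hf : ∀ w ∈ U, DifferentiableAt ℂ f w) {c : X} (hc : c ∈ U)
    (w h : X) :
    DifferentiableAt ℂ (fun μ : ℂ => fderiv ℂ f (c + μ • w) h) 0 := by
  by_cases hw : w = 0
  · simp only [hw, smul_zero, add_zero]
    exact differentiableAt_const _
  by_cases hh : h = 0
  · simp only [hh, map_zero]
    exact differentiableAt_const _
  obtain ⟨r, M, hr, hM0, hsub, hM⟩ := loc_bound hU hf hc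
  have hwn : 0 < ‖w‖ := norm_pos_iff.2 hw
  have hhn : 0 < ‖h‖ := norm_pos_iff.2 hh
  set a := r / ‖h‖ with ha
  have ha0 : 0 < a := by positivity
  set ε := r / (2 * ‖w‖) with hε
  have hε0 : 0 < ε := by positivity
  -- membership facts
  have hmem : ∀ μ : ℂ, μ ∈ ball (0:ℂ) ε → ∀ lam : ℂ, lam ∈ closedBall (0:ℂ) a →
      c + μ • w + lam • h ∈ closedBall c (2*r) := by
    intro μ hμ lam hlam
    rw [mem_ball_zero_iff] at hμ
    rw [mem_closedBall_zero_iff] at hlam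
    rw [mem_closedBall_iff_norm]
    calc ‖c + μ•w + lam•h - c‖ = ‖μ•w + lam•h‖ := by congr 1; abel
      _ ≤ ‖μ•w‖ + ‖lam•h‖ := norm_add_le _ _
      _ ≤ r/2 + r := by
          refine add_le_add ?_ ?_
          · rw [norm_smul]
            calc ‖μ‖ * ‖w‖ ≤ ε * ‖w‖ := by gcongr
              _ = r/2 := by rw [hε]; field_simp
          · rw [norm_smul]
            calc ‖lam‖ * ‖h‖ ≤ a * ‖h‖ := by gcongr
              _ = r := div_mul_cancel₀ _ hhn.ne'
      _ ≤ 2*r := by linarith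
  have hmemU : ∀ μ : ℂ, μ ∈ ball (0:ℂ) ε → ∀ lam : ℂ, lam ∈ closedBall (0:ℂ) a →
      c + μ • w + lam • h ∈ U := fun μ hμ lam hlam =>
    hsub (closedBall_subset_closedBall (by linarith) (hmem μ hμ lam hlam))
  have hcircle : ∀ θ : ℝ, circleMap 0 a θ ∈ closedBall (0:ℂ) a := fun θ =>
    sphere_subset_closedBall (circleMap_mem_sphere 0 ha0.le θ)
  -- the integrand family
  set F : ℂ → ℝ → Y := fun μ θ =>
    (circleMap 0 a θ)⁻¹ • f (c + μ • w + circleMap 0 a θ • h) with hF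
  set F' : ℂ → ℝ → Y := fun μ θ =>
    (circleMap 0 a θ)⁻¹ • (fderiv ℂ f (c + μ • w + circleMap 0 a θ • h) w) with hF'
  have hfc : ContinuousOn f U := fun z hz => (hf z hz).continuousAt.continuousWithinAt
  have hFcont : ∀ μ ∈ ball (0:ℂ) ε, Continuous (F μ) := by
    intro μ hμ
    apply Continuous.smul
    · exact (continuous_circleMap 0 a).inv₀ (fun θ => circleMap_ne_center ha0.ne')
    · rw [continuous_iff_continuousAt]
      intro θ
      have hc2 : ContinuousAt (fun θ' : ℝ => c + μ • w + circleMap 0 a θ' • h) θ :=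
        (continuous_const.add ((continuous_circleMap 0 a).smul continuous_const)).continuousAt
      have hc3 : ContinuousAt f ((fun θ' : ℝ => c + μ • w + circleMap 0 a θ' • h) θ) :=
        (hf _ (hmemU μ hμ _ (hcircle θ))).continuousAt
      exact ContinuousAt.comp (g := f)
        (f := fun θ' : ℝ => c + μ • w + circleMap 0 a θ' • h) hc3 hc2
  have hF'cont : Continuous (F' 0) := by
    apply Continuous.smul
    · exact (continuous_circleMap 0 a).inv₀ (fun θ => circleMap_ne_center ha0.ne')
    · rw [continuous_iff_continuousAt]
      intro θ
      have hc1 : ContinuousAt (fun z => fderiv ℂ f z) (c + (0:ℂ) • w + circleMap 0 a θ • h) :=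
        contG hU hf (hmemU 0 (mem_ball_self hε0) _ (hcircle θ))
      have hc2 : ContinuousAt (fun θ' : ℝ => c + (0:ℂ) • w + circleMap 0 a θ' • h) θ :=
        (continuous_const.add ((continuous_circleMap 0 a).smul continuous_const)).continuousAt
      have hc5 : ContinuousAt (fun θ' : ℝ => fderiv ℂ f (c + (0:ℂ) • w + circleMap 0 a θ' • h)) θ :=
        ContinuousAt.comp (g := fun z => fderiv ℂ f z)
          (f := fun θ' : ℝ => c + (0:ℂ) • w + circleMap 0 a θ' • h) hc1 hc2
      have hc6 : ContinuousAt (fun T : X →L[ℂ] Y => T w)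
          ((fun θ' : ℝ => fderiv ℂ f (c + (0:ℂ) • w + circleMap 0 a θ' • h)) θ) :=
        (ContinuousLinearMap.apply ℂ Y w).continuous.continuousAt
      exact ContinuousAt.comp (g := fun T : X →L[ℂ] Y => T w)
        (f := fun θ' : ℝ => fderiv ℂ f (c + (0:ℂ) • w + circleMap 0 a θ' • h)) hc6 hc5
  -- derivative of F in μ
  have hFderiv : ∀ θ : ℝ, ∀ μ ∈ ball (0:ℂ) ε, HasDerivAt (fun μ' => F μ' θ) (F' μ θ) μ := by
    intro θ μ hμ
    have hmm : c + μ • w + circleMap 0 a θ • h ∈ U := hmemU μ hμ _ (hcircle θ)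
    have hinner : HasDerivAt (fun μ' : ℂ => c + μ' • w + circleMap 0 a θ • h) w μ := by
      simpa using ((((hasDerivAt_id μ).smul_const w).const_add c).add_const
        (circleMap 0 a θ • h))
    have := (hf _ hmm).hasFDerivAt.comp_hasDerivAt μ hinner
    exact this.const_smul _
  have hopb : ∀ z ∈ closedBall c (2*r), ∀ h' : X, ‖fderiv ℂ f z h'‖ ≤ M/(2*r) * ‖h'‖ :=
    opb hf (by positivity)
      (fun x hx => hsub (closedBall_subset_closedBall (by linarith) hx))
      (fun z hz => hM z (closedBall_subset_closedBall (by linarith) hz))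
  have hbound : ∀ θ : ℝ, ∀ μ ∈ ball (0:ℂ) ε, ‖F' μ θ‖ ≤ a⁻¹ * (M / (2*r) * ‖w‖) := by
    intro θ μ hμ
    rw [hF']
    simp only
    rw [norm_smul, norm_inv]
    have h1 : ‖circleMap 0 a θ‖ = a := by simp [abs_of_pos ha0]
    rw [h1]
    exact mul_le_mul_of_nonneg_left (hopb _ (hmem μ hμ _ (hcircle θ)) w) (by positivity)
  have hdom := intervalIntegral.hasDerivAt_integral_of_dominated_loc_of_deriv_le
    (F := F) (F' := F') (x₀ := (0:ℂ)) (a := 0) (b := 2*π) (μ := volume)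
    (bound := fun _ => a⁻¹ * (M / (2*r) * ‖w‖)) (ball_mem_nhds _ hε0)
    (Filter.eventually_of_mem (ball_mem_nhds _ hε0)
      (fun μ hμ => (hFcont μ hμ).aestronglyMeasurable))
    ((hFcont 0 (mem_ball_self hε0)).intervalIntegrable 0 (2*π))
    hF'cont.aestronglyMeasurable
    (Filter.Eventually.of_forall fun θ _ μ hμ => hbound θ μ hμ)
    intervalIntegrable_const
    (Filter.Eventually.of_forall fun θ _ μ hμ => hFderiv θ μ hμ)
  have hrep : ∀ μ ∈ ball (0:ℂ) ε,
      fderiv ℂ f (c + μ • w) h = (2*π:ℝ)⁻¹ • ∫ θ in (0:ℝ)..2*π, F μ θ := by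
    intro μ hμ
    have hg : ∀ t ∈ closedBall (0:ℂ) a,
        DifferentiableAt ℂ (fun s : ℂ => f (c + μ•w + s•h)) t := by
      intro t ht
      exact (line_hasDerivAt hf (z := c + μ•w) h (hmemU μ hμ t ht)).differentiableAt
    have hCD := cauchy_deriv_eq (fun s : ℂ => f (c + μ•w + s•h)) ha0 hg
    have hder : deriv (fun s : ℂ => f (c + μ•w + s•h)) 0 = fderiv ℂ f (c + μ•w) h := by
      rw [(line_hasDerivAt hf (z := c + μ•w) h
        (hmemU μ hμ 0 (mem_closedBall_self ha0.le))).deriv]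
      simp
    rw [← hder, hCD]
  have hdiff : DifferentiableAt ℂ (fun μ => (2*π:ℝ)⁻¹ • ∫ θ in (0:ℝ)..2*π, F μ θ) 0 :=
    (hdom.2.differentiableAt).const_smul _
  refine hdiff.congr_of_eventuallyEq ?_
  exact Filter.eventuallyEq_of_mem (ball_mem_nhds _ hε0) (fun μ hμ => hrep μ hμ)


variable {X : Type*} [NormedAddCommGroup X] [NormedSpace ℂ X] [CompleteSpace X]
  {Y : Type*} [NormedAddCommGroup Y] [NormedSpace ℂ Y] [CompleteSpace Y]
  {U : Set X} {f : X → Y}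

lemma key2 (hU : IsOpen U) (hf : ∀ w ∈ U, DifferentiableAt ℂ f w) {c : X}
    (w h : X) {μ₀ : ℂ} (hc : c + μ₀ • w ∈ U) :
    DifferentiableAt ℂ (fun μ : ℂ => fderiv ℂ f (c + μ • w) h) μ₀ := by
  have h1 := key1 hU hf hc w h
  have heq : (fun μ : ℂ => fderiv ℂ f (c + μ • w) h)
      = (fun ν : ℂ => fderiv ℂ f ((c + μ₀ • w) + ν • w) h) ∘ (fun μ : ℂ => μ - μ₀) := by
    funext μ
    simp only [Function.comp_apply]
    congr 2
    rw [sub_smul]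
    abel
  rw [heq]
  have h2 : DifferentiableAt ℂ (fun μ : ℂ => μ - μ₀) μ₀ := differentiableAt_id.sub_const μ₀
  have h3 : (fun μ : ℂ => μ - μ₀) μ₀ = 0 := sub_self μ₀
  refine DifferentiableAt.comp μ₀ ?_ h2
  rw [sub_self]
  exact h1

lemma swap_integral' (Φ : ℝ → ℝ → Y) (hΦ : Continuous (Function.uncurry Φ)) :
    ∫ θ₁ in (0:ℝ)..2*π, ∫ θ₂ in (0:ℝ)..2*π, Φ θ₁ θ₂
      = ∫ θ₂ in (0:ℝ)..2*π, ∫ θ₁ in (0:ℝ)..2*π, Φ θ₁ θ₂ := by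
  have hle : (0:ℝ) ≤ 2*π := Real.two_pi_pos.le
  have hint : Integrable (Function.uncurry Φ)
      ((volume.restrict (Ioc (0:ℝ) (2*π))).prod (volume.restrict (Ioc (0:ℝ) (2*π)))) := by
    rw [Measure.prod_restrict]
    have h1 : IntegrableOn (Function.uncurry Φ) (Icc (0:ℝ) (2*π) ×ˢ Icc (0:ℝ) (2*π)) :=
      hΦ.continuousOn.integrableOn_compact (isCompact_Icc.prod isCompact_Icc)
    exact h1.mono_set (Set.prod_mono Ioc_subset_Icc_self Ioc_subset_Icc_self)
  simp only [intervalIntegral.integral_of_le hle]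
  exact MeasureTheory.integral_integral_swap hint

end Holo


/-- Let `X`, `Y` be complex Banach spaces, `U ⊆ X` open, and let
`f : X → Y` be Fréchet differentiable over `ℂ` on `U`.  Let `z₀ ∈ U` and `v ∈ X`
be such that `z₀ + λ • v ∈ U` for every `λ ∈ ℂ` with `|λ| ≤ 1`.  Then the map
`G : z ↦ fderiv ℂ f z` (with values in `X →L[ℂ] Y`) is Fréchet differentiable at
`z₀`, and for every `h ∈ X`,
`((fderiv ℂ G z₀) h) v
  = (1 / (2π)) ∫₀^{2π} e^{-iθ} • ((fderiv ℂ f (z₀ + e^{iθ} • v)) h) dθ`. -/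
theorem stmt_10
    {X : Type*} [NormedAddCommGroup X] [NormedSpace ℂ X] [CompleteSpace X]
    {Y : Type*} [NormedAddCommGroup Y] [NormedSpace ℂ Y] [CompleteSpace Y]
    (U : Set X) (hU : IsOpen U) (f : X → Y)
    (hf : ∀ w ∈ U, DifferentiableAt ℂ f w)
    (z₀ : X) (hz₀ : z₀ ∈ U) (v : X)
    (hv : ∀ lam : ℂ, ‖lam‖ ≤ 1 → z₀ + lam • v ∈ U) :
    DifferentiableAt ℂ (fun z : X => fderiv ℂ f z) z₀ ∧
    ∀ h : X,
      (fderiv ℂ (fun z : X => fderiv ℂ f z) z₀ h) v = (1 / (2 * π)) •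
        ∫ θ in (0 : ℝ)..(2 * π),
          Complex.exp (-(θ : ℂ) * Complex.I) •
            (fderiv ℂ f (z₀ + Complex.exp ((θ : ℂ) * Complex.I) • v) h) := by
  obtain ⟨r, M, hr, hM0, hsub, hM⟩ := loc_bound hU hf hz₀
  set G : X → X →L[ℂ] Y := fun z => fderiv ℂ f z with hG
  set b : X → X → Y := fun k h => deriv (fun μ : ℂ => fderiv ℂ f (z₀ + μ • k) h) 0 with hb
  have hUsub4 : closedBall z₀ (4*r) ⊆ U :=
    fun x hx => hsub (closedBall_subset_closedBall (by linarith) hx)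
  have hUsub1 : closedBall z₀ r ⊆ U :=
    fun x hx => hsub (closedBall_subset_closedBall (by linarith) hx)
  -- membership helper
  have hmemk : ∀ k : X, ‖k‖ ≤ r → ∀ μ : ℂ, ‖μ‖ ≤ 2 →
      z₀ + μ • k ∈ closedBall z₀ (4*r) := by
    intro k hk μ hμ
    rw [mem_closedBall_iff_norm, add_sub_cancel_left, norm_smul]
    nlinarith [norm_nonneg μ, norm_nonneg k]
  have hmemkh : ∀ k h : X, ‖k‖ ≤ r → ‖h‖ ≤ r → ∀ μ lam : ℂ,
      ‖μ‖ ≤ 2 → ‖lam‖ ≤ 2 →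
      z₀ + μ • k + lam • h ∈ closedBall z₀ (8*r) := by
    intro k h hk hh μ lam hμ hlam
    rw [mem_closedBall_iff_norm, show z₀ + μ•k + lam•h - z₀ = μ•k + lam•h from by abel]
    calc ‖μ•k + lam•h‖ ≤ ‖μ•k‖ + ‖lam•h‖ := norm_add_le _ _
      _ ≤ 8*r := by
          rw [norm_smul, norm_smul]
          nlinarith [norm_nonneg μ, norm_nonneg lam, norm_nonneg k, norm_nonneg h]
  -- operator norm bound near z₀
  have hopb : ∀ z ∈ closedBall z₀ (2*r), ∀ h' : X, ‖fderiv ℂ f z h'‖ ≤ M/(2*r) * ‖h'‖ :=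
    opb hf (by positivity)
      (fun x hx => hsub (closedBall_subset_closedBall (by linarith) hx))
      (fun z hz => hM z (closedBall_subset_closedBall (by linarith) hz))
  -- differentiability of μ ↦ G(z₀+μk)h on discs
  have hdiffline : ∀ k h : X, ‖k‖ ≤ r → ∀ μ : ℂ, ‖μ‖ ≤ 2 →
      DifferentiableAt ℂ (fun μ' : ℂ => fderiv ℂ f (z₀ + μ' • k) h) μ :=
    fun k h hk μ hμ => key2 hU hf k h (hUsub4 (hmemk k hk μ hμ))
  -- basic linearity facts
  have hb0k : ∀ h : X, b 0 h = 0 := by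
    intro h
    rw [hb]
    simp only [smul_zero, add_zero]
    exact deriv_const _ _
  have hbk0 : ∀ k : X, b k 0 = 0 := by
    intro k
    rw [hb]
    simp only [map_zero]
    exact deriv_const _ _
  -- the double-integral representation
  have hdouble : ∀ k h : X, ‖k‖ ≤ r → ‖h‖ ≤ r →
      b k h = (2*π:ℝ)⁻¹ • ((2*π:ℝ)⁻¹ • ∫ θ₁ in (0:ℝ)..2*π, ∫ θ₂ in (0:ℝ)..2*π,
        ((circleMap 0 2 θ₁)⁻¹ * (circleMap 0 2 θ₂)⁻¹) •
          f (z₀ + circleMap 0 2 θ₁ • k + circleMap 0 2 θ₂ • h)) := by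
    intro k h hk hh
    have hcirc2 : ∀ θ : ℝ, ‖circleMap 0 2 θ‖ ≤ 2 := by
      intro θ
      simp [circleMap, _root_.abs_of_nonneg]
    have houter : b k h = (2*π:ℝ)⁻¹ • ∫ θ₁ in (0:ℝ)..2*π,
        (circleMap 0 2 θ₁)⁻¹ • fderiv ℂ f (z₀ + circleMap 0 2 θ₁ • k) h := by
      rw [hb]
      exact cauchy_deriv_eq _ two_pos
        (fun μ hμ => hdiffline k h hk μ (by
          rw [mem_closedBall_zero_iff] at hμ; exact hμ))
    have hinner : ∀ θ₁ : ℝ, fderiv ℂ f (z₀ + circleMap 0 2 θ₁ • k) h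
        = (2*π:ℝ)⁻¹ • ∫ θ₂ in (0:ℝ)..2*π, (circleMap 0 2 θ₂)⁻¹ •
            f (z₀ + circleMap 0 2 θ₁ • k + circleMap 0 2 θ₂ • h) := by
      intro θ₁
      have hmm : ∀ t : ℂ, ‖t‖ ≤ 2 → (z₀ + circleMap 0 2 θ₁ • k) + t • h ∈ U :=
        fun t ht => hsub (hmemkh k h hk hh _ t (hcirc2 θ₁) ht)
      have hg : ∀ t ∈ closedBall (0:ℂ) 2,
          DifferentiableAt ℂ (fun s : ℂ => f (z₀ + circleMap 0 2 θ₁ • k + s • h)) t := by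
        intro t ht
        rw [mem_closedBall_zero_iff] at ht
        exact (line_hasDerivAt hf h (hmm t ht)).differentiableAt
      have hCD := cauchy_deriv_eq _ two_pos hg
      have hder : deriv (fun s : ℂ => f (z₀ + circleMap 0 2 θ₁ • k + s • h)) 0
          = fderiv ℂ f (z₀ + circleMap 0 2 θ₁ • k) h := by
        rw [(line_hasDerivAt hf h (hmm 0 (by simp))).deriv]
        simp
      rw [← hder, hCD]
    have hpoint : ∀ θ₁ : ℝ, (circleMap 0 2 θ₁)⁻¹ • fderiv ℂ f (z₀ + circleMap 0 2 θ₁ • k) h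
        = (2*π:ℝ)⁻¹ • ∫ θ₂ in (0:ℝ)..2*π,
            ((circleMap 0 2 θ₁)⁻¹ * (circleMap 0 2 θ₂)⁻¹) •
              f (z₀ + circleMap 0 2 θ₁ • k + circleMap 0 2 θ₂ • h) := by
      intro θ₁
      rw [hinner θ₁, smul_comm]
      congr 1
      rw [← intervalIntegral.integral_smul]
      apply intervalIntegral.integral_congr
      intro θ₂ _
      simp only [smul_smul]
    rw [houter, intervalIntegral.integral_congr (fun θ₁ _ => hpoint θ₁),
      intervalIntegral.integral_smul]
  -- symmetry for small vectors
  have hsym_small : ∀ k h : X, ‖k‖ ≤ r → ‖h‖ ≤ r → b k h = b h k := by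
    intro k h hk hh
    rw [hdouble k h hk hh, hdouble h k hh hk]
    congr 2
    have hfc : ∀ p : ℝ × ℝ, ContinuousAt
        (Function.uncurry (fun θ₁ θ₂ : ℝ =>
          ((circleMap 0 2 θ₁)⁻¹ * (circleMap 0 2 θ₂)⁻¹) •
            f (z₀ + circleMap 0 2 θ₁ • k + circleMap 0 2 θ₂ • h))) p := by
      intro p
      apply ContinuousAt.smul
      · exact (((continuous_circleMap 0 2).comp continuous_fst).inv₀
          (fun q => circleMap_ne_center two_ne_zero)).continuousAt.mul
          (((continuous_circleMap 0 2).comp continuous_snd).inv₀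
          (fun q => circleMap_ne_center two_ne_zero)).continuousAt
      · have hpath : Continuous (fun q : ℝ × ℝ =>
            z₀ + circleMap 0 2 q.1 • k + circleMap 0 2 q.2 • h) := by
          continuity
        have hin : (fun q : ℝ × ℝ => z₀ + circleMap 0 2 q.1 • k + circleMap 0 2 q.2 • h) p ∈ U := by
          apply hsub
          apply hmemkh k h hk hh _ _ (by
            simp [circleMap, _root_.abs_of_nonneg]) (by
            simp [circleMap, _root_.abs_of_nonneg])
        exact ContinuousAt.comp (g := f)
          (f := fun q : ℝ × ℝ => z₀ + circleMap 0 2 q.1 • k + circleMap 0 2 q.2 • h)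
          ((hf _ hin).continuousAt) hpath.continuousAt
    rw [swap_integral' _ (continuous_iff_continuousAt.2 hfc)]
    apply intervalIntegral.integral_congr
    intro α _
    apply intervalIntegral.integral_congr
    intro β _
    beta_reduce
    have habel : z₀ + circleMap 0 2 β • k + circleMap 0 2 α • h
        = z₀ + circleMap 0 2 α • h + circleMap 0 2 β • k := by abel
    rw [mul_comm, habel]
  -- homogeneity in k
  have hsmulk : ∀ (a : ℂ) (k h : X), b (a • k) h = a • b k h := by
    intro a k h
    have hd : DifferentiableAt ℂ (fun μ' : ℂ => fderiv ℂ f (z₀ + μ' • k) h) 0 :=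
      key2 hU hf k h (by simpa using hz₀)
    have hlin : HasDerivAt (fun μ : ℂ => a * μ) a 0 := by
      simpa using (hasDerivAt_id (0:ℂ)).const_mul a
    have hcomp := HasDerivAt.scomp_of_eq (x := (0:ℂ)) hd.hasDerivAt hlin (by simp)
    have heq : ((fun μ' : ℂ => fderiv ℂ f (z₀ + μ' • k) h) ∘ (fun μ : ℂ => a * μ))
        = (fun μ : ℂ => fderiv ℂ f (z₀ + μ • (a • k)) h) := by
      funext μ
      simp only [Function.comp_apply]
      rw [smul_smul, mul_comm]
    rw [heq] at hcomp
    rw [hb]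
    simp only
    rw [hcomp.deriv]
  -- additivity in h
  have haddh : ∀ (k h₁ h₂ : X), b k (h₁ + h₂) = b k h₁ + b k h₂ := by
    intro k h₁ h₂
    have hd1 : DifferentiableAt ℂ (fun μ' : ℂ => fderiv ℂ f (z₀ + μ' • k) h₁) 0 :=
      key2 hU hf k h₁ (by simpa using hz₀)
    have hd2 : DifferentiableAt ℂ (fun μ' : ℂ => fderiv ℂ f (z₀ + μ' • k) h₂) 0 :=
      key2 hU hf k h₂ (by simpa using hz₀)
    have heq : (fun μ : ℂ => fderiv ℂ f (z₀ + μ • k) (h₁ + h₂))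
        = fun μ : ℂ => fderiv ℂ f (z₀ + μ • k) h₁ + fderiv ℂ f (z₀ + μ • k) h₂ := by
      funext μ; exact map_add _ _ _
    rw [hb]
    simp only
    rw [heq, deriv_fun_add hd1 hd2]
  -- smul in h
  have hsmulh : ∀ (a : ℂ) (k h : X), b k (a • h) = a • b k h := by
    intro a k h
    have hd : DifferentiableAt ℂ (fun μ' : ℂ => fderiv ℂ f (z₀ + μ' • k) h) 0 :=
      key2 hU hf k h (by simpa using hz₀)
    have heq : (fun μ : ℂ => fderiv ℂ f (z₀ + μ • k) (a • h))
        = fun μ : ℂ => a • fderiv ℂ f (z₀ + μ • k) h := by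
      funext μ; exact map_smul _ _ _
    rw [hb]
    simp only
    rw [heq, deriv_fun_const_smul a hd]
  -- full symmetry by scaling
  have hsym : ∀ k h : X, b k h = b h k := by
    intro k h
    by_cases hk0 : k = 0
    · rw [hk0, hb0k, hbk0]
    by_cases hh0 : h = 0
    · rw [hh0, hb0k, hbk0]
    have hkn : 0 < ‖k‖ := norm_pos_iff.2 hk0
    have hhn : 0 < ‖h‖ := norm_pos_iff.2 hh0
    set t : ℝ := min (r/‖k‖) (r/‖h‖) with ht
    have ht0 : 0 < t := lt_min (by positivity) (by positivity)
    have htk : ‖(t:ℂ) • k‖ ≤ r := by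
      rw [norm_smul, Complex.norm_real, Real.norm_eq_abs, abs_of_pos ht0]
      calc t * ‖k‖ ≤ (r/‖k‖) * ‖k‖ := by
            refine mul_le_mul_of_nonneg_right (min_le_left _ _) (norm_nonneg _)
        _ = r := div_mul_cancel₀ _ hkn.ne'
    have hth : ‖(t:ℂ) • h‖ ≤ r := by
      rw [norm_smul, Complex.norm_real, Real.norm_eq_abs, abs_of_pos ht0]
      calc t * ‖h‖ ≤ (r/‖h‖) * ‖h‖ := by
            refine mul_le_mul_of_nonneg_right (min_le_right _ _) (norm_nonneg _)
        _ = r := div_mul_cancel₀ _ hhn.ne'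
    have h1 := hsym_small ((t:ℂ) • k) ((t:ℂ) • h) htk hth
    rw [hsmulk, hsmulh, hsmulk, hsmulh] at h1
    have htne : ((t:ℝ) : ℂ) ≠ 0 := by
      simp [ht0.ne']
    exact smul_right_injective Y htne (smul_right_injective Y htne h1)
  -- additivity in k
  have haddk : ∀ (k₁ k₂ h : X), b (k₁ + k₂) h = b k₁ h + b k₂ h := by
    intro k₁ k₂ h
    rw [hsym (k₁ + k₂) h, haddh, hsym h k₁, hsym h k₂]
  -- boundedness
  have hbnd : ∀ k h : X, ‖b k h‖ ≤ M / r^2 * ‖k‖ * ‖h‖ := by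
    intro k h
    by_cases hk0 : k = 0
    · rw [hk0, hb0k]
      simp
    have hkn : 0 < ‖k‖ := norm_pos_iff.2 hk0
    set ρ := r / ‖k‖ with hρ
    have hρ0 : 0 < ρ := by positivity
    have hg : ∀ μ ∈ closedBall (0:ℂ) ρ,
        DifferentiableAt ℂ (fun μ' : ℂ => fderiv ℂ f (z₀ + μ' • k) h) μ := by
      intro μ hμ
      rw [mem_closedBall_zero_iff] at hμ
      refine key2 hU hf k h (hUsub1 ?_)
      rw [mem_closedBall_iff_norm, add_sub_cancel_left, norm_smul]
      calc ‖μ‖ * ‖k‖ ≤ ρ * ‖k‖ := by gcongr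
        _ = r := div_mul_cancel₀ _ hkn.ne'
    have hK : ∀ μ ∈ closedBall (0:ℂ) ρ,
        ‖fderiv ℂ f (z₀ + μ • k) h‖ ≤ M/(2*r) * ‖h‖ := by
      intro μ hμ
      rw [mem_closedBall_zero_iff] at hμ
      have hmem' : z₀ + μ • k ∈ closedBall z₀ r := by
        rw [mem_closedBall_iff_norm, add_sub_cancel_left, norm_smul]
        calc ‖μ‖ * ‖k‖ ≤ ρ * ‖k‖ := by gcongr
          _ = r := div_mul_cancel₀ _ hkn.ne'
      exact hopb _ (closedBall_subset_closedBall (by linarith) hmem') h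
    have h0 := deriv_bound _ hρ0 hg hK
    calc ‖b k h‖ ≤ M/(2*r) * ‖h‖ / ρ := h0
      _ = M * ‖h‖ * ‖k‖ / (2*r^2) := by
          rw [hρ, div_div_eq_mul_div]
          ring
      _ ≤ M / r^2 * ‖k‖ * ‖h‖ := by
          rw [show M / r^2 * ‖k‖ * ‖h‖ = M * ‖h‖ * ‖k‖ / r^2 from by ring]
          refine div_le_div_of_nonneg_left (by positivity) (by positivity) (by nlinarith)
  -- build the continuous bilinear map
  set B₂ : X →ₗ[ℂ] X →ₗ[ℂ] Y := LinearMap.mk₂ ℂ b haddk hsmulk haddh hsmulh with hB₂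
  set Bc : X →L[ℂ] X →L[ℂ] Y :=
    LinearMap.mkContinuous₂ B₂ (M / r^2) (fun k h => by
      simpa [hB₂] using hbnd k h) with hBc
  have hBcapp : ∀ k h : X, Bc k h = b k h := by
    intro k h
    rw [hBc]
    rfl
  -- the quadratic estimate
  have hquad : ∀ k : X, ‖k‖ ≤ r/2 → ‖G (z₀ + k) - G z₀ - Bc k‖ ≤ M / r^3 * ‖k‖^2 := by
    intro k hk
    by_cases hk0 : k = 0
    · rw [hk0]
      simp
    have hkn : 0 < ‖k‖ := norm_pos_iff.2 hk0
    set ρ := r / ‖k‖ with hρ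
    have hρ0 : 0 < ρ := by positivity
    refine ContinuousLinearMap.opNorm_le_bound _ (by positivity) (fun h => ?_)
    have hg : ∀ μ ∈ closedBall (0:ℂ) ρ,
        DifferentiableAt ℂ (fun μ' : ℂ => fderiv ℂ f (z₀ + μ' • k) h) μ := by
      intro μ hμ
      rw [mem_closedBall_zero_iff] at hμ
      refine key2 hU hf k h (hUsub1 ?_)
      rw [mem_closedBall_iff_norm, add_sub_cancel_left, norm_smul]
      calc ‖μ‖ * ‖k‖ ≤ ρ * ‖k‖ := by gcongr
        _ = r := div_mul_cancel₀ _ hkn.ne'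
    have hK : ∀ μ ∈ closedBall (0:ℂ) ρ,
        ‖fderiv ℂ f (z₀ + μ • k) h‖ ≤ M/(2*r) * ‖h‖ := by
      intro μ hμ
      rw [mem_closedBall_zero_iff] at hμ
      have hmem' : z₀ + μ • k ∈ closedBall z₀ r := by
        rw [mem_closedBall_iff_norm, add_sub_cancel_left, norm_smul]
        calc ‖μ‖ * ‖k‖ ≤ ρ * ‖k‖ := by gcongr
          _ = r := div_mul_cancel₀ _ hkn.ne'
      exact hopb _ (closedBall_subset_closedBall (by linarith) hmem') h
    have habs1 : ‖(1:ℂ)‖ < ρ := by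
      rw [norm_one]
      rw [hρ, lt_div_iff₀ hkn]
      linarith
    have ht := taylor_bound _ hρ0 hg hK habs1
    simp only [one_smul, zero_smul, add_zero, norm_one] at ht
    have hlhs : ‖(G (z₀ + k) - G z₀ - Bc k) h‖
        = ‖fderiv ℂ f (z₀ + k) h - fderiv ℂ f z₀ h
          - deriv (fun μ' : ℂ => fderiv ℂ f (z₀ + μ' • k) h) 0‖ := by
      rw [ContinuousLinearMap.sub_apply, ContinuousLinearMap.sub_apply, hBcapp]
    rw [hlhs]
    refine le_trans ht ?_
    have hq : (1:ℝ)/ρ = ‖k‖ / r := by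
      rw [hρ, one_div, inv_div]
    have hq2 : ‖k‖/r ≤ 1/2 := by
      rw [div_le_div_iff₀ hr two_pos]
      linarith
    have hq0 : 0 ≤ ‖k‖/r := by positivity
    have hKnn : 0 ≤ M/(2*r) * ‖h‖ := by positivity
    calc M/(2*r) * ‖h‖ * (1/ρ)^2 / (1 - 1/ρ)
        = M/(2*r) * ‖h‖ * (‖k‖/r)^2 / (1 - ‖k‖/r) := by rw [hq]
      _ ≤ M/(2*r) * ‖h‖ * (‖k‖/r)^2 / (1/2) := by
          refine div_le_div_of_nonneg_left (by positivity) (by norm_num) (by linarith)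
      _ = M / r^3 * ‖k‖^2 * ‖h‖ := by
          field_simp
  -- HasFDerivAt
  have hasfd : HasFDerivAt G Bc z₀ := by
    rw [hasFDerivAt_iff_isLittleO_nhds_zero]
    rw [Asymptotics.isLittleO_iff]
    intro ε hε
    set C := M / r^3 with hC
    have hC0 : 0 ≤ C := by positivity
    set δ := min (r/2) (ε/(C+1)) with hδ
    have hδ0 : 0 < δ := lt_min (by positivity) (by positivity)
    rw [Metric.eventually_nhds_iff]
    refine ⟨δ, hδ0, fun {k} hk => ?_⟩
    rw [dist_zero_right] at hk
    have hk1 : ‖k‖ ≤ r/2 := le_trans hk.le (min_le_left _ _)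
    have hk2 : ‖k‖ ≤ ε/(C+1) := le_trans hk.le (min_le_right _ _)
    calc ‖G (z₀ + k) - G z₀ - Bc k‖ ≤ C * ‖k‖^2 := hquad k hk1
      _ ≤ ε * ‖k‖ := by
          have h3 : ‖k‖ * (C+1) ≤ ε := by
            rw [← le_div_iff₀ (by positivity : (0:ℝ) < C + 1)]
            exact hk2
          nlinarith [h3, norm_nonneg k, hC0]
  constructor
  · exact hasfd.differentiableAt
  · intro h
    have hfd : fderiv ℂ (fun z : X => fderiv ℂ f z) z₀ = Bc := hasfd.fderiv
    rw [hfd, hBcapp, hsym h v]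
    -- now compute b v h via Cauchy at radius 1
    have hg : ∀ μ ∈ closedBall (0:ℂ) 1,
        DifferentiableAt ℂ (fun μ' : ℂ => fderiv ℂ f (z₀ + μ' • v) h) μ := by
      intro μ hμ
      rw [mem_closedBall_zero_iff] at hμ
      exact key2 hU hf v h (hv μ hμ)
    have hCD := cauchy_deriv_eq _ one_pos hg
    rw [hb]
    simp only
    rw [hCD, one_div]
    congr 1
    apply intervalIntegral.integral_congr
    intro θ _
    beta_reduce
    have hcm : circleMap 0 1 θ = Complex.exp ((θ:ℂ) * Complex.I) := by
      simp [circleMap]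
    rw [hcm, ← Complex.exp_neg, neg_mul]
end
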